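/- arXiv:2209.01897 — 8 statements merged into one kernel-verified Lean document; each statement's English description precedes it below -/
import Mathlib

section
/- Let k be a field, S a finite-dimensional split k-algebra which is constrained, and I a two-sided ideal of S. Then the factor algebra S/I is split and constrained, i.e. J(S/I) ⊆ [S/I, S/I]. -/
open TensorProduct

namespace Paper

variable (k S : Type*) [Field k] [Ring S] [Algebra k S]

/-- The `k`-linear span of all commutators `x*y - y*x` in `S`; denoted `[S,S]` in the paper. -/
def commutatorSpan : Submodule k S :=
  Submodule.span k {x : S | ∃ a b : S, x = a * b - b * a}

/-- `S` is (radically) constrained if its Jacobson radical is contained in `[S,S]`. -/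
def IsConstrained : Prop :=
  ((⊥ : Ideal S).jacobson : Set S) ⊆ (commutatorSpan k S : Set S)

/-- `S` is split if every endomorphism of a simple left `S`-module is a scalar. -/
def IsSplitAlgebra : Prop :=
  ∀ (L : Type) [AddCommGroup L] [Module S L], IsSimpleModule S L →
    ∀ f : L →ₗ[S] L, ∃ c : k, ∀ x : L, f x = algebraMap k S c • x

/-- A bundled finite-dimensional left `S`-module (with its underlying `k`-structure). -/
structure FDModule where
  V : Type
  [addCommGroup : AddCommGroup V]
  [modk : Module k V]
  [modS : Module S V]
  [tower : IsScalarTower k S V]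
  [scomm : SMulCommClass S k V]
  [fd : FiniteDimensional k V]

attribute [instance] FDModule.addCommGroup FDModule.modk FDModule.modS FDModule.tower
  FDModule.scomm FDModule.fd

variable (M : Type*) [AddCommGroup M] [Module k M] [Module S M] [IsScalarTower k S M]
  [SMulCommClass S k M]

/-- The twisted trace function `χ_θ ∈ S*`, `χ_θ(s) = trace (θ ∘ ρ(s))`, where `ρ` is the
representation of `S` on `M`. -/
noncomputable def twCharOf (θ : M →ₗ[k] M) : Module.Dual k S :=
  (LinearMap.trace k M).comp
    ((LinearMap.llcomp k M M M θ).comp (Algebra.lsmul k k M).toLinearMap)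

variable {k S}

/-- The twisted trace function of a bundled module. -/
noncomputable def twChar (N : FDModule k S) (θ : N.V →ₗ[k] N.V) : Module.Dual k S :=
  twCharOf k S N.V θ

/-- The natural character `χ_V ∈ S*` of a finite-dimensional module. -/
noncomputable def natChar (N : FDModule k S) : Module.Dual k S :=
  twChar N LinearMap.id

variable (k S)

/-- `C₀(S)`: the span of the natural characters of all finite-dimensional `S`-modules. -/
noncomputable def charSpan : Submodule k (Module.Dual k S) :=
  Submodule.span k (Set.range fun N : FDModule k S => natChar N)

end Paper

section Aux

theorem coatom_comap {R M N : Type*} [Ring R] [AddCommGroup M] [AddCommGroup N] [Module R M]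
    [Module R N] (f : M →ₗ[R] N) (hf : Function.Surjective f) {W : Submodule R N}
    (hW : IsCoatom W) : IsCoatom (W.comap f) := by
  have hker : LinearMap.ker f ≤ W.comap f := fun x hx => by
    simp only [Submodule.mem_comap, LinearMap.mem_ker.mp hx]
    exact W.zero_mem
  constructor
  · intro h
    apply hW.1
    rw [eq_top_iff]
    intro y _
    obtain ⟨x, rfl⟩ := hf y
    exact (h ▸ Submodule.mem_top : x ∈ W.comap f)
  · intro X hX
    have hkerX : LinearMap.ker f ≤ X := hker.trans hX.le
    have h1 : W < Submodule.map f X := by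
      rw [← Submodule.map_comap_eq_of_surjective hf W]
      refine lt_of_le_of_ne (Submodule.map_mono hX.le) fun h => ?_
      have : X = W.comap f := by
        have h2 := Submodule.comap_map_eq f X
        rw [← h, Submodule.map_comap_eq_of_surjective hf W] at h2
        -- h2 : W.comap f = X ⊔ ker f
        rw [h2, sup_eq_left.mpr hkerX]
      exact hX.ne' this
    have h2 : Submodule.map f X = ⊤ := hW.2 _ h1
    have h3 := Submodule.comap_map_eq f X
    rw [h2, Submodule.comap_top] at h3
    rw [eq_top_iff, h3, sup_eq_left.mpr hkerX]


theorem fin_inf_maximal (k S : Type) [Field k] [Ring S] [Algebra k S] [FiniteDimensional k S] :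
    ∃ fs : Finset (Ideal S), (∀ M ∈ fs, M.IsMaximal) ∧
      (⊥ : Ideal S).jacobson = fs.inf id := by
  classical
  haveI : IsArtinian S S := isArtinian_of_tower k inferInstance
  set F : Set (Ideal S) := {I | ∃ fs : Finset (Ideal S), (∀ M ∈ fs, M.IsMaximal) ∧ I = fs.inf id}
    with hF
  have htop : (⊤ : Ideal S) ∈ F := ⟨∅, by simp, by simp⟩
  obtain ⟨N, ⟨fs, hmax, rfl⟩, hmin⟩ := IsArtinian.set_has_minimal F ⟨⊤, htop⟩
  refine ⟨fs, hmax, ?_⟩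
  have hNle : ∀ M : Ideal S, M.IsMaximal → fs.inf id ≤ M := by
    intro M hM
    by_contra h
    refine hmin (fs.inf id ⊓ M) ⟨insert M fs, ?_, ?_⟩ (inf_lt_left.mpr h)
    · intro M' hM'
      rcases Finset.mem_insert.mp hM' with rfl | h'
      exacts [hM, hmax _ h']
    · rw [Finset.inf_insert, id, inf_comm]
  apply le_antisymm
  · exact Finset.le_inf fun M hM => sInf_le ⟨bot_le, hmax M hM⟩
  · exact le_sInf fun J hJ => hNle J hJ.2

theorem semisimple_quot_jacobson (k S : Type) [Field k] [Ring S] [Algebra k S]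
    [FiniteDimensional k S] : IsSemisimpleModule S (S ⧸ (⊥ : Ideal S).jacobson) := by
  classical
  obtain ⟨fs, hmax, hJ⟩ := fin_inf_maximal k S
  have hsimple : ∀ M : fs, IsSimpleModule S (S ⧸ (M : Ideal S)) := fun M =>
    isSimpleModule_iff_isCoatom.mpr (Ideal.isMaximal_def.mp (hmax M M.2))
  haveI hss : ∀ M : fs, IsSemisimpleModule S (S ⧸ (M : Ideal S)) := fun M => by
    haveI := hsimple M; infer_instance
  haveI hpi : IsSemisimpleModule S (∀ M : fs, S ⧸ (M : Ideal S)) := by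
    refine isSemisimpleModule_of_isSemisimpleModule_submodule'
      (p := fun i => LinearMap.range (LinearMap.single S (fun M : fs => S ⧸ (M : Ideal S)) i))
      (fun i => ?_) ?_
    · have hinj : Function.Injective
          (LinearMap.single S (fun M : fs => S ⧸ (M : Ideal S)) i) := by
        rw [← LinearMap.ker_eq_bot, LinearMap.ker_single]
      exact .congr (LinearEquiv.ofInjective _ hinj).symm
    · simp_rw [LinearMap.range_eq_map, Submodule.iSup_map_single, Submodule.pi_top]
  let φ : S →ₗ[S] ∀ M : fs, S ⧸ (M : Ideal S) := LinearMap.pi fun M => ((M : Ideal S)).mkQ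
  have hker : LinearMap.ker φ = (⊥ : Ideal S).jacobson := by
    rw [LinearMap.ker_pi, hJ, Finset.inf_id_eq_sInf, sInf_eq_iInf']
    simp_rw [Submodule.ker_mkQ]
    rfl
  rw [← hker]
  exact IsSemisimpleModule.congr (M := ↥(LinearMap.range φ)) (LinearMap.quotKerEquivRange φ)

theorem jacobson_le_sup (k S : Type) [Field k] [Ring S] [Algebra k S] [FiniteDimensional k S]
    (K : Ideal S) : K.jacobson ≤ K ⊔ (⊥ : Ideal S).jacobson := by
  set J := (⊥ : Ideal S).jacobson with hJdef
  set B := K ⊔ J with hB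
  intro x hx
  by_contra hxB
  haveI hss : IsSemisimpleModule S (S ⧸ J) := semisimple_quot_jacobson k S
  haveI : IsSemisimpleModule S (S ⧸ B) := by
    have hle : J ≤ B := le_sup_right
    let ψ : (S ⧸ J) →ₗ[S] (S ⧸ B) := Submodule.mapQ J B LinearMap.id (by simpa using hle)
    have hsurj : Function.Surjective ψ := by
      intro y
      obtain ⟨s, rfl⟩ := Submodule.mkQ_surjective B y
      exact ⟨Submodule.mkQ J s, rfl⟩
    exact IsSemisimpleModule.congr (M := (S ⧸ J) ⧸ LinearMap.ker ψ)
      (LinearMap.quotKerEquivOfSurjective ψ hsurj).symm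
  set xb : S ⧸ B := Submodule.mkQ B x with hxbdef
  have hxb : xb ≠ 0 := by
    simpa [hxbdef, Submodule.Quotient.mk_eq_zero] using hxB
  obtain ⟨C, hC⟩ := exists_isCompl (Submodule.span S {xb})
  let e := Submodule.quotientEquivOfIsCompl _ _ hC.symm
  haveI : Nontrivial (Submodule.span S {xb}) :=
    ⟨⟨⟨xb, Submodule.mem_span_singleton_self xb⟩, 0, by
      simp only [ne_eq, Submodule.mk_eq_zero]; exact hxb⟩⟩
  haveI : Nontrivial ((S ⧸ B) ⧸ C) := e.toEquiv.nontrivial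
  haveI : IsCoatomic (Submodule S ((S ⧸ B) ⧸ C)) :=
    isCoatomic_of_isAtomic_of_complementedLattice_of_isModular
  rcases (IsCoatomic.eq_top_or_exists_le_coatom (⊥ : Submodule S ((S ⧸ B) ⧸ C))) with h | ⟨W, hW, -⟩
  · exact absurd h bot_ne_top
  set M' := W.comap C.mkQ with hM'def
  have hM' : IsCoatom M' := coatom_comap _ (Submodule.mkQ_surjective C) hW
  have hxM' : xb ∉ M' := by
    intro h
    apply hW.1
    have h1 : Submodule.span S {xb} ≤ M' := (Submodule.span_le).mpr (by simpa using h)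
    have h2 : C ≤ M' := by
      intro c hc
      show C.mkQ c ∈ W
      rw [Submodule.mkQ_apply, (Submodule.Quotient.mk_eq_zero C).mpr hc]
      exact W.zero_mem
    have htop : M' = ⊤ := top_unique
      (le_trans (codisjoint_iff_le_sup.mp hC.codisjoint) (sup_le h1 h2))
    rw [← Submodule.map_comap_eq_of_surjective (Submodule.mkQ_surjective C) W, ← hM'def, htop,
      Submodule.map_top, Submodule.range_mkQ]
  set M := M'.comap B.mkQ with hMdef
  have hM : IsCoatom M := coatom_comap _ (Submodule.mkQ_surjective B) hM'
  have hKM : K ≤ M := by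
    intro a ha
    show B.mkQ a ∈ M'
    rw [Submodule.mkQ_apply, (Submodule.Quotient.mk_eq_zero B).mpr (Submodule.mem_sup_left ha)]
    exact M'.zero_mem
  have hxM : x ∈ M :=
    sInf_le (show M ∈ {J | K ≤ J ∧ J.IsMaximal} from ⟨hKM, Ideal.isMaximal_def.mpr hM⟩) hx
  exact hxM' hxM

end Aux

open Paper in
/-- Section 2, (1): a factor algebra of a constrained split algebra is split and constrained.
The factor algebra `S/I` is presented as the image of a surjective `k`-algebra map `π : S → T`. -/
theorem statement1 (k S T : Type) [Field k] [Ring S] [Algebra k S] [FiniteDimensional k S]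
    [Ring T] [Algebra k T]
    (hsplit : IsSplitAlgebra k S) (hcon : IsConstrained k S)
    (π : S →ₐ[k] T) (hπ : Function.Surjective π) :
    IsSplitAlgebra k T ∧ IsConstrained k T := by
  constructor
  · intro L _ instTL hLsimple f
    letI instS : Module S L := Module.compHom L π.toRingHom
    haveI : Nontrivial L := IsSimpleModule.nontrivial (R := T) (M := L)
    have hSsimple : IsSimpleModule S L := by
      refine { eq_bot_or_eq_top := ?_ }
      intro p
      let q : Submodule T L :=
        { carrier := p
          add_mem' := fun hx hy => p.add_mem hx hy
          zero_mem' := p.zero_mem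
          smul_mem' := by
            intro t x hx
            obtain ⟨s, rfl⟩ := hπ t
            exact p.smul_mem s hx }
      have hpq : ∀ x : L, x ∈ p ↔ x ∈ q := fun x => Iff.rfl
      rcases hLsimple.1.2 q with h | h
      · left; ext x; rw [hpq x, h]; rfl
      · right; ext x; rw [hpq x, h]; rfl
    let fS : L →ₗ[S] L :=
      { toFun := f
        map_add' := f.map_add
        map_smul' := fun s x => f.map_smul (π s) x }
    obtain ⟨c, hc⟩ := hsplit L hSsimple fS
    refine ⟨c, fun x => ?_⟩
    have h1 := hc x
    have h2 : (algebraMap k S c) • x = π (algebraMap k S c) • x := rfl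
    rw [h2, π.commutes] at h1
    exact h1
  · intro t ht
    have hcomap := Ideal.comap_jacobson_of_surjective (f := π.toRingHom) hπ
      (K := (⊥ : Ideal T))
    obtain ⟨s, rfl⟩ := hπ t
    have hs : s ∈ (Ideal.comap π.toRingHom (⊥ : Ideal T)).jacobson := by
      rw [← hcomap]
      exact Ideal.mem_comap.mpr ht
    have hs2 := jacobson_le_sup k S (Ideal.comap π.toRingHom (⊥ : Ideal T)) hs
    rw [Submodule.mem_sup] at hs2
    obtain ⟨a, ha, b, hb, rfl⟩ := hs2
    have hπa : π a = 0 := by simpa [Ideal.mem_comap] using ha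
    have hπs : π (a + b) = π b := by simp [map_add, hπa]
    have hmap : commutatorSpan k S ≤ (commutatorSpan k T).comap π.toLinearMap := by
      rw [commutatorSpan, Submodule.span_le]
      rintro x ⟨u, v, rfl⟩
      simp only [Set.mem_setOf_eq, SetLike.mem_coe, Submodule.mem_comap, AlgHom.toLinearMap_apply,
        map_sub, map_mul]
      exact Submodule.subset_span ⟨π u, π v, rfl⟩
    show π (a + b) ∈ (commutatorSpan k T : Set T)
    rw [hπs]
    exact hmap (hcon hb)
end

section
/- Let k be a field, S a finite-dimensional split k-algebra, and K an extension field of k. Then the K-algebra S_K = K ⊗_k S is split, and S_K is constrained if and only if S is constrained. -/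
open TensorProduct

namespace StmtTwo


variable {R : Type*} [Ring R]

theorem left_inv_of_mem_jacobson {t : R} (ht : t ∈ (⊥ : Ideal R).jacobson) :
    ∃ z : R, z * (1 + t) = 1 := by
  obtain ⟨z, hz⟩ := Ideal.mem_jacobson_iff.1 ht 1
  rw [Ideal.mem_bot, mul_one, sub_eq_zero] at hz
  exact ⟨z, by rw [mul_add, mul_one, add_comm, hz]⟩

theorem isUnit_one_add_of_mem_jacobson {t : R} (ht : t ∈ (⊥ : Ideal R).jacobson) :
    IsUnit (1 + t) := by
  obtain ⟨z, hz⟩ := left_inv_of_mem_jacobson ht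
  have hz0 : z + z * t = 1 := by rw [mul_add, mul_one] at hz; exact hz
  have hz' : z = 1 - z * t := eq_sub_of_add_eq hz0
  have hzt : -(z * t) ∈ (⊥ : Ideal R).jacobson :=
    Submodule.neg_mem _ ((⊥ : Ideal R).jacobson.smul_mem z ht)
  obtain ⟨z₂, hz₂⟩ := left_inv_of_mem_jacobson hzt
  have hz₂z : z₂ * z = 1 := by rw [hz', sub_eq_add_neg]; exact hz₂
  have hright : (1 + t) * z = 1 := by
    have h2 : z₂ = 1 + t := by
      calc z₂ = z₂ * (z * (1 + t)) := by rw [hz, mul_one]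
        _ = (z₂ * z) * (1 + t) := by rw [mul_assoc]
        _ = 1 + t := by rw [hz₂z, one_mul]
    rw [← h2, hz₂z]
  exact ⟨⟨1 + t, z, hright, hz⟩, rfl⟩

theorem mem_jacobson_bot_of_forall {x : R}
    (h : ∀ y : R, IsUnit (1 + y * x)) : x ∈ (⊥ : Ideal R).jacobson := by
  rw [Ideal.mem_jacobson_iff]
  intro y
  obtain ⟨u, hu⟩ := h y
  refine ⟨↑u⁻¹, ?_⟩
  rw [Ideal.mem_bot, sub_eq_zero]
  have h1 : (↑u⁻¹ : R) * (1 + y * x) = 1 := by rw [← hu]; exact u.inv_mul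
  rw [mul_add, mul_one] at h1
  rw [mul_assoc, add_comm]
  exact h1

theorem jacobson_bot_mul_mem_right {x y : R} (hx : x ∈ (⊥ : Ideal R).jacobson) :
    x * y ∈ (⊥ : Ideal R).jacobson :=
  Ideal.mul_mem_right y _ hx



/-! ### Coordinates on `K ⊗[k] V` with respect to a `k`-basis of `K`. -/

variable (k K : Type) [Field k] [Field K] [Algebra k K]

noncomputable abbrev bK := Module.Basis.ofVectorSpace k K

variable {V : Type*} [AddCommGroup V] [Module k V]

/-- The coordinate map `K ⊗[k] V → V` at index `i` of a basis of `K` over `k`. -/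
noncomputable def chi (i : Module.Basis.ofVectorSpaceIndex k K) : K ⊗[k] V →ₗ[k] V :=
  TensorProduct.lift ((LinearMap.lsmul k V).comp ((bK k K).coord i))

@[simp] lemma chi_tmul (i : Module.Basis.ofVectorSpaceIndex k K) (c : K) (v : V) :
    chi k K i (c ⊗ₜ v) = ((bK k K).repr c) i • v := rfl

theorem chi_repr (a : K ⊗[k] V) :
    ∃ F : Finset (Module.Basis.ofVectorSpaceIndex k K),
      (∀ i ∉ F, chi k K i a = 0) ∧ a = ∑ i ∈ F, (bK k K i : K) ⊗ₜ chi k K i a := by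
  classical
  induction a with
  | zero => exact ⟨∅, fun i _ => by simp, by simp⟩
  | tmul c v =>
      refine ⟨((bK k K).repr c).support, fun i hi => ?_, ?_⟩
      · simp [Finsupp.notMem_support_iff.1 hi]
      · have : ∀ i ∈ ((bK k K).repr c).support,
            (bK k K i : K) ⊗ₜ[k] chi k K i (c ⊗ₜ[k] v)
              = (((bK k K).repr c) i • bK k K i : K) ⊗ₜ[k] v := by
          intro i _
          rw [chi_tmul, TensorProduct.smul_tmul]
        rw [Finset.sum_congr rfl this, ← TensorProduct.sum_tmul]
        congr 1
        conv_lhs => rw [← (bK k K).linearCombination_repr c]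
        rw [Finsupp.linearCombination_apply, Finsupp.sum]
  | add x y hx hy =>
      obtain ⟨F, hF0, hF⟩ := hx
      obtain ⟨G, hG0, hG⟩ := hy
      refine ⟨F ∪ G, fun i hi => ?_, ?_⟩
      · simp at hi
        rw [map_add, hF0 i hi.1, hG0 i hi.2, add_zero]
      · have h1 : ∑ i ∈ F ∪ G, (bK k K i : K) ⊗ₜ[k] chi k K i (x + y)
            = (∑ i ∈ F ∪ G, (bK k K i : K) ⊗ₜ[k] chi k K i x)
              + ∑ i ∈ F ∪ G, (bK k K i : K) ⊗ₜ[k] chi k K i y := by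
          rw [← Finset.sum_add_distrib]
          exact Finset.sum_congr rfl fun i _ => by rw [map_add, TensorProduct.tmul_add]
        rw [h1, ← Finset.sum_subset Finset.subset_union_left
            (fun i _ hi => by rw [hF0 i hi, TensorProduct.tmul_zero]),
          ← Finset.sum_subset Finset.subset_union_right
            (fun i _ hi => by rw [hG0 i hi, TensorProduct.tmul_zero]), ← hF, ← hG]

/-- If `1 ⊗ v = 0` in `K ⊗[k] V` then `v = 0`. -/
theorem eq_zero_of_one_tmul_eq_zero {v : V} (h : ((1 : K) ⊗ₜ v : K ⊗[k] V) = 0) : v = 0 := by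
  have h1 : ((bK k K).repr 1) ≠ 0 := by
    intro h0
    have := ((bK k K).repr).injective (a₁ := (1 : K)) (a₂ := 0) (by simp [h0])
    exact one_ne_zero this
  obtain ⟨i, hi⟩ : ∃ i, ((bK k K).repr 1) i ≠ 0 := by
    by_contra hc
    push_neg at hc
    exact h1 (Finsupp.ext hc)
  have h2 : chi k K i ((1 : K) ⊗ₜ v : K ⊗[k] V) = ((bK k K).repr 1) i • v := rfl
  rw [h] at h2
  have := h2.symm
  rw [map_zero] at this
  exact (smul_eq_zero.1 this).resolve_left hi

/-- Membership in a `K`-span of `1 ⊗ W` can be detected by coordinates. -/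
theorem mem_span_one_tmul_of_chi {W : Type*} [AddCommGroup W] [Module k W]
    (P : Submodule k W) {a : K ⊗[k] W} (hW : ∀ i, chi k K i a ∈ P) :
    a ∈ Submodule.span K ((fun w => ((1 : K) ⊗ₜ w : K ⊗[k] W)) '' (P : Set W)) := by
  obtain ⟨F, -, hF⟩ := chi_repr k K a
  rw [hF]
  refine Submodule.sum_mem _ fun i _ => ?_
  have h1 : ((bK k K i : K) ⊗ₜ chi k K i a : K ⊗[k] W)
      = (bK k K i : K) • ((1 : K) ⊗ₜ chi k K i a : K ⊗[k] W) := by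
    rw [TensorProduct.smul_tmul', smul_eq_mul, mul_one]
  rw [h1]
  exact Submodule.smul_mem _ _ (Submodule.subset_span ⟨chi k K i a, hW i, rfl⟩)


section DensitySec


variable {k S : Type} [Field k] [Ring S] [Algebra k S]
variable {L : Type} [AddCommGroup L] [Module k L] [Module S L] [IsScalarTower k S L]

theorem smulCommClass_of_tower : SMulCommClass S k L := by
  constructor
  intro s c x
  rw [← algebraMap_smul S c x, ← algebraMap_smul S c (s • x), smul_smul, smul_smul,
    Algebra.commutes]

/-- Jacobson density theorem for a split simple module. -/
theorem density (hsplit : Paper.IsSplitAlgebra k S) [IsSimpleModule S L] :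
    ∀ (n : ℕ) (v : Fin n → L), LinearIndependent k v → ∀ w : Fin n → L,
      ∃ s : S, ∀ i, s • v i = w i := by
  intro n
  induction n with
  | zero => exact fun v _ w => ⟨0, fun i => i.elim0⟩
  | succ n IH =>
      intro v hv w
      -- first: for each j, find s with s • v j ≠ 0 and s • v i = 0 for i ≠ j
      have onehot : ∀ j : Fin (n + 1), ∃ s : S, s • v j ≠ 0 ∧ ∀ i, i ≠ j → s • v i = 0 := by
        intro j
        by_contra hcon
        push_neg at hcon
        -- hcon : ∀ s, s • v j ≠ 0 → ∃ i ≠ j, s • v i ≠ 0, i.e. killing all others kills j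
        have hkill : ∀ s : S, (∀ i, i ≠ j → s • v i = 0) → s • v j = 0 := by
          intro s hs
          by_contra hne
          obtain ⟨i, hij, hi⟩ := hcon s hne
          exact hi (hs i hij)
        set α : S →ₗ[S] (Fin n → L) :=
          LinearMap.pi (fun i => LinearMap.toSpanSingleton S L (v (j.succAbove i))) with hα_def
        have hα : Function.Surjective α := by
          intro x
          obtain ⟨s, hs⟩ := IH (v ∘ j.succAbove)
            (hv.comp j.succAbove (Fin.succAbove_right_injective)) x
          exact ⟨s, funext fun i => hs i⟩
        set β : S →ₗ[S] L := LinearMap.toSpanSingleton S L (v j) with hβ_def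
        have hker : ∀ s : S, α s = 0 → β s = 0 := by
          intro s h0
          apply hkill
          intro i hij
          obtain ⟨i', hi'⟩ := Fin.exists_succAbove_eq hij
          have h3 : s • v (j.succAbove i') = 0 := by
            have h4 := congrFun h0 i'
            simpa [hα_def] using h4
          rw [← hi']
          exact h3
        -- the (nonlinear) section-based map G
        set G : (Fin n → L) → L := fun x => β (Classical.choose (hα x)) with hG_def
        have hG : ∀ (x : Fin n → L) (s : S), α s = x → G x = β s := by
          intro x s hs
          have h1 : α (Classical.choose (hα x) - s) = 0 := by
            rw [map_sub, Classical.choose_spec (hα x), hs, sub_self]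
          have h2 := hker _ h1
          rw [map_sub, sub_eq_zero] at h2
          exact h2
        have hGadd : ∀ x y, G (x + y) = G x + G y := by
          intro x y
          obtain ⟨sx, hsx⟩ := hα x
          obtain ⟨sy, hsy⟩ := hα y
          rw [hG x sx hsx, hG y sy hsy, ← map_add]
          exact hG _ (sx + sy) (by rw [map_add, hsx, hsy])
        have hGsmul : ∀ (s' : S) (x), G (s' • x) = s' • G x := by
          intro s' x
          obtain ⟨sx, hsx⟩ := hα x
          rw [hG x sx hsx, ← map_smul]
          exact hG _ (s' • sx) (by rw [map_smul, hsx])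
        -- the components of G are S-linear
        have hsplit' : ∀ i : Fin n, ∃ c : k, ∀ z : L,
            G (Pi.single i z) = algebraMap k S c • z := by
          intro i
          classical
          let fLin : L →ₗ[S] L :=
            { toFun := fun z => G (Pi.single i z)
              map_add' := fun a b => by rw [← hGadd, ← Pi.single_add]
              map_smul' := fun s' a => by
                show G (Pi.single i (s' • a)) = s' • G (Pi.single i a)
                rw [Pi.single_smul, hGsmul] }
          obtain ⟨c, hc⟩ := hsplit L inferInstance fLin
          exact ⟨c, fun z => hc z⟩
        classical
        choose c hc using hsplit'
        -- conclude: v j is a combination of the other v's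
        have hcomb : ∀ s : S, s • v j = ∑ i, algebraMap k S (c i) • (s • v (j.succAbove i)) := by
          intro s
          have h1 : β s = G (α s) := (hG (α s) s rfl).symm
          have h2 : α s = ∑ i, Pi.single i (s • v (j.succAbove i)) := by
            rw [Finset.univ_sum_single (fun i => s • v (j.succAbove i))]
            rfl
          have hGsum : G (α s) = ∑ i, G (Pi.single i (s • v (j.succAbove i))) := by
            rw [h2]
            exact map_sum (AddMonoidHom.mk' G hGadd) _ _
          rw [hβ_def, LinearMap.toSpanSingleton_apply] at h1
          rw [h1, hGsum]
          exact Finset.sum_congr rfl fun i _ => hc i _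
        have h1 := hcomb 1
        simp only [one_smul] at h1
        have h2 : v j = ∑ i, (c i) • v (j.succAbove i) := by
          rw [h1]
          exact Finset.sum_congr rfl fun i _ => algebraMap_smul S (c i) _
        -- contradiction with linear independence
        have hli := Fintype.linearIndependent_iff.1 hv (Fin.insertNth (α := fun _ => k) j 1 (fun i => - c i)) ?_ j
        · rw [Fin.insertNth_apply_same] at hli
          exact one_ne_zero hli
        · rw [Fin.sum_univ_succAbove _ j, Fin.insertNth_apply_same]
          have : ∀ i : Fin n,
              Fin.insertNth (α := fun _ => k) j 1 (fun i => - c i) (j.succAbove i) • v (j.succAbove i)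
              = -(c i • v (j.succAbove i)) := by
            intro i
            rw [Fin.insertNth_apply_succAbove, neg_smul]
          rw [Finset.sum_congr rfl fun i _ => this i, one_smul, Finset.sum_neg_distrib,
            ← sub_eq_add_neg, sub_eq_zero]
          exact h2
      -- now combine the one-hot elements
      choose s₀ hs₀ hs₀' using onehot
      have hty : ∀ j, ∃ t : S, (t * s₀ j) • v j = w j := by
        intro j
        obtain ⟨t, ht⟩ := IsSimpleModule.toSpanSingleton_surjective S (hs₀ j) (w j)
        exact ⟨t, by rw [← smul_smul]; exact ht⟩
      choose t ht using hty
      refine ⟨∑ j, t j * s₀ j, fun i => ?_⟩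
      rw [Finset.sum_smul]
      have : ∀ j, j ≠ i → (t j * s₀ j) • v i = 0 := by
        intro j hj
        rw [← smul_smul, hs₀' j i (Ne.symm hj), smul_zero]
      rw [Finset.sum_eq_single i (fun j _ hj => this j hj) (by simp), ht i]


end DensitySec



section Nakayama

variable {k S : Type} [Field k] [Ring S] [Algebra k S]

theorem nakayama_span (F : Finset S)
    (h : Submodule.span S (F : Set S)
      ≤ (⊥ : Ideal S).jacobson • Submodule.span S (F : Set S)) :
    Submodule.span S (F : Set S) = ⊥ := by
  classical
  induction F using Finset.induction_on with
  | empty => simp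
  | @insert x G hxG IH =>
      rw [Finset.coe_insert] at h ⊢
      have hxW : x ∈ Submodule.span S (insert x (G : Set S)) :=
        Submodule.subset_span (Set.mem_insert x _)
      have h2 : x ∈ (⊥ : Ideal S).jacobson •
          (Submodule.span S {x} ⊔ Submodule.span S (G : Set S)) := by
        rw [← Submodule.span_insert]; exact h hxW
      rw [Submodule.smul_sup] at h2
      obtain ⟨u, hu, v, hv, huv⟩ := Submodule.mem_sup.1 h2
      have hu' : ∃ t ∈ (⊥ : Ideal S).jacobson, u = t * x := by
        refine Submodule.smul_induction_on hu ?_ ?_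
        · intro r hr n hn
          obtain ⟨a, ha⟩ := Submodule.mem_span_singleton.1 hn
          exact ⟨r * a, jacobson_bot_mul_mem_right hr,
            by rw [← ha, smul_eq_mul, smul_eq_mul, mul_assoc]⟩
        · rintro y z ⟨t1, ht1, rfl⟩ ⟨t2, ht2, rfl⟩
          exact ⟨t1 + t2, Submodule.add_mem _ ht1 ht2, (add_mul t1 t2 x).symm⟩
      obtain ⟨t, htJ, rfl⟩ := hu'
      have hvG : v ∈ Submodule.span S (G : Set S) :=
        (Submodule.smul_le.2 fun r _ n hn => Submodule.smul_mem _ r hn) hv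
      have hx2 : (1 - t) * x ∈ Submodule.span S (G : Set S) := by
        have he : (1 - t) * x = x - t * x := by rw [sub_mul, one_mul]
        have hvx : v = x - t * x := eq_sub_of_add_eq' huv
        rw [he, ← hvx]
        exact hvG
      have hunit : IsUnit (1 - t) := by
        have h3 := isUnit_one_add_of_mem_jacobson (Submodule.neg_mem _ htJ)
        rwa [← sub_eq_add_neg] at h3
      obtain ⟨w, hw⟩ := hunit
      have hxG : x ∈ Submodule.span S (G : Set S) := by
        have h3 : x = ↑w⁻¹ * ((1 - t) * x) := by
          rw [← hw, ← mul_assoc, Units.inv_mul, one_mul]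
        rw [h3]
        exact Submodule.smul_mem _ _ hx2
      have hspan : Submodule.span S (insert x (G : Set S)) = Submodule.span S (G : Set S) :=
        Submodule.span_insert_eq_span hxG
      rw [hspan] at h ⊢
      exact IH h

/-- Iterated product of the Jacobson radical. -/
def Jpow (S : Type*) [Ring S] : ℕ → Ideal S
  | 0 => ⊤
  | n + 1 => (⊥ : Ideal S).jacobson • Jpow S n

theorem jpow_antitone (n : ℕ) : Jpow S (n + 1) ≤ Jpow S n := by
  induction n with
  | zero => exact le_top
  | succ n IH => exact Submodule.smul_mono le_rfl IH

theorem jpow_eq_bot [FiniteDimensional k S] : ∃ n, Jpow S n = ⊥ := by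
  classical
  set f : ℕ → ℕ := fun n => Module.finrank k ((Jpow S n).restrictScalars k) with hf
  have hstep : ∃ n, f (n + 1) = f n := by
    by_contra hc
    push_neg at hc
    have hlt : ∀ n, f (n + 1) < f n := fun n =>
      lt_of_le_of_ne (Submodule.finrank_mono (fun y hy => jpow_antitone n hy)) (hc n)
    have hbound : ∀ n, f n + n ≤ f 0 := by
      intro n
      induction n with
      | zero => simp
      | succ n IH =>
          have h5 := hlt n
          omega
    exact absurd (hbound (f 0 + 1)) (by omega)
  obtain ⟨n, hn⟩ := hstep
  have heq : Jpow S (n + 1) = Jpow S n := by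
    apply Submodule.restrictScalars_injective k S S
    exact Submodule.eq_of_le_of_finrank_le (fun y hy => jpow_antitone n hy) hn.ge
  -- find a finite S-generating set of Jpow S n
  have hfg : ((Jpow S n).restrictScalars k).FG := IsNoetherian.noetherian _
  obtain ⟨F, hF⟩ := hfg
  have hFsub : (F : Set S) ⊆ (Jpow S n : Set S) := by
    intro y hy
    have : y ∈ Submodule.span k (F : Set S) := Submodule.subset_span hy
    rw [hF] at this
    exact this
  have hspan : Submodule.span S (F : Set S) = Jpow S n := by
    apply le_antisymm
    · rw [Submodule.span_le]; exact hFsub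
    · intro y hy
      have h1 : y ∈ Submodule.span k (F : Set S) := by rw [hF]; exact hy
      exact Submodule.span_le_restrictScalars k S (F : Set S) h1
  refine ⟨n, ?_⟩
  rw [← hspan]
  apply nakayama_span
  rw [hspan]
  exact le_of_eq (heq.symm.trans (by rw [Jpow]))

end Nakayama


section Density
variable {k S : Type} [Field k] [Ring S] [Algebra k S]
variable {L : Type} [AddCommGroup L] [Module k L] [Module S L] [IsScalarTower k S L]

variable [SMulCommClass S k L]

theorem rho_surjective (hsplit : Paper.IsSplitAlgebra k S) [IsSimpleModule S L]
    [FiniteDimensional k L] (f : L →ₗ[k] L) : ∃ s : S, ∀ x : L, s • x = f x := by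
  let b := Module.finBasis k L
  obtain ⟨s, hs⟩ := density hsplit _ b b.linearIndependent (fun i => f (b i))
  refine ⟨s, fun x => ?_⟩
  have h1 : ((Algebra.lsmul k k L : S →ₐ[k] Module.End k L) s : L →ₗ[k] L) = f :=
    b.ext fun i => by simpa using hs i
  have h2 := congrFun (congrArg (fun (g : L →ₗ[k] L) => (g : L → L)) h1) x
  simpa using h2

end Density

section EngineB

variable (k K S L : Type) [Field k] [Field K] [Algebra k K] [Ring S] [Algebra k S]
variable [AddCommGroup L] [Module k L] [Module S L] [IsScalarTower k S L] [SMulCommClass S k L]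

/-- The representation of `K ⊗ S` on `K ⊗ L`. -/
noncomputable def Theta : (K ⊗[k] S) →ₐ[K] Module.End K (K ⊗[k] L) :=
  (LinearMap.tensorProductEnd k K L).comp
    (Algebra.TensorProduct.map (AlgHom.id K K) (Algebra.lsmul k k L))

lemma Theta_tmul (c d : K) (s : S) (x : L) :
    Theta k K S L (c ⊗ₜ s) (d ⊗ₜ x) = (c * d) ⊗ₜ (s • x) := by
  simp [Theta, LinearMap.tensorProductEnd, LinearMap.tensorProduct, TensorProduct.smul_tmul']

theorem theta_surjective (hsplit : Paper.IsSplitAlgebra k S) [IsSimpleModule S L]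
    [FiniteDimensional k L] : Function.Surjective (Theta k K S L) := by
  classical
  intro F
  set b := Module.finBasis k L with hb
  set B := Module.Basis.baseChange K b with hB
  have hE : ∀ i j, ∃ s : S, ∀ x, s • x = (b.coord i) x • b j := fun i j =>
    rho_surjective hsplit (LinearMap.smulRight (b.coord i) (b j))
  choose s hs using hE
  refine ⟨∑ i, ∑ j, (B.repr (F (B i))) j ⊗ₜ[k] s i j, ?_⟩
  refine B.ext fun i₀ => ?_
  rw [map_sum, LinearMap.coe_sum, Finset.sum_apply]
  have hterm : ∀ i, ((Theta k K S L (∑ j, (B.repr (F (B i))) j ⊗ₜ[k] s i j)) (B i₀))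
      = if i = i₀ then F (B i₀) else 0 := by
    intro i
    rw [map_sum, LinearMap.coe_sum, Finset.sum_apply]
    have h1 : ∀ j, (Theta k K S L ((B.repr (F (B i))) j ⊗ₜ[k] s i j)) (B i₀)
        = (B.repr (F (B i))) j • (if i = i₀ then B j else 0) := by
      intro j
      have hBi : B i₀ = (1:K) ⊗ₜ[k] b i₀ := Module.Basis.baseChange_apply K b i₀
      have hBj : B j = (1:K) ⊗ₜ[k] b j := Module.Basis.baseChange_apply K b j
      rw [hBi, Theta_tmul, hs, Module.Basis.coord_apply, Module.Basis.repr_self_apply]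
      by_cases h : i₀ = i
      · rw [if_pos h, if_pos h.symm, one_smul, mul_one, hBj, TensorProduct.smul_tmul',
          smul_eq_mul, mul_one]
      · rw [if_neg h, if_neg (fun hh => h hh.symm)]
        rw [zero_smul, TensorProduct.tmul_zero, smul_zero]
    rw [Finset.sum_congr rfl fun j _ => h1 j]
    by_cases h : i = i₀
    · simp only [h, if_true]
      exact B.sum_repr (F (B i₀))
    · simp only [h, if_false, smul_zero, Finset.sum_const_zero]
  rw [Finset.sum_congr rfl fun i _ => hterm i,
    Finset.sum_ite_eq' Finset.univ i₀ (fun _ => F (B i₀))]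
  simp

/-- `K ⊗ L` as a module over `K ⊗ S`, packaged as a type synonym. -/
def TL (_k _K _S _L : Type) [Field _k] [Field _K] [Algebra _k _K] [Ring _S] [Algebra _k _S]
    [AddCommGroup _L] [Module _k _L] : Type := _K ⊗[_k] _L

noncomputable instance : AddCommGroup (TL k K S L) := inferInstanceAs (AddCommGroup (K ⊗[k] L))
noncomputable instance : Module K (TL k K S L) := inferInstanceAs (Module K (K ⊗[k] L))
noncomputable instance : Module (K ⊗[k] S) (TL k K S L) :=
  Module.compHom (K ⊗[k] L) (Theta k K S L).toRingHom

/-- The identity, viewed as a map `K ⊗ L → TL`. -/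
def toTL : K ⊗[k] L → TL k K S L := id

/-- The identity, viewed as a map `TL → K ⊗ L`. -/
def fromTL : TL k K S L → K ⊗[k] L := id

lemma TL.smul_def (a : K ⊗[k] S) (x : TL k K S L) :
    a • x = toTL k K S L (Theta k K S L a (fromTL k K S L x)) := rfl

lemma TL.ksmul_def (c : K) (x : TL k K S L) :
    c • x = toTL k K S L (c • fromTL k K S L x) := rfl

lemma TL.algebraMap_smul (c : K) (x : TL k K S L) :
    algebraMap K (K ⊗[k] S) c • x = c • x := by
  rw [TL.smul_def, AlgHom.commutes, TL.ksmul_def]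
  exact congrArg (toTL k K S L) (Module.algebraMap_end_apply K K (K ⊗[k] L) c (fromTL k K S L x))

theorem TL.isSimple (hsplit : Paper.IsSplitAlgebra k S) [IsSimpleModule S L]
    [FiniteDimensional k L] : IsSimpleModule (K ⊗[k] S) (TL k K S L) := by
  haveI := IsSimpleModule.nontrivial S L
  obtain ⟨v, hv⟩ := exists_ne (0 : L)
  have hv1 : toTL k K S L ((1 : K) ⊗ₜ v) ≠ 0 := fun h => hv (eq_zero_of_one_tmul_eq_zero k K h)
  have key : ∀ W : Submodule (K ⊗[k] S) (TL k K S L), W ≠ ⊥ → W = ⊤ := by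
    intro W hW
    obtain ⟨w, hwW, hw0⟩ := Submodule.exists_mem_ne_zero_of_ne_bot hW
    rw [eq_top_iff]
    intro u _
    obtain ⟨ξ₀, hξ₀⟩ : ∃ ξ₀ : Module.Dual K (K ⊗[k] L), ξ₀ (fromTL k K S L w) ≠ 0 := by
      by_contra hc
      push_neg at hc
      exact hw0 ((Module.forall_dual_apply_eq_zero_iff K (fromTL k K S L w)).1 hc)
    set F : Module.End K (K ⊗[k] L) :=
      LinearMap.smulRight ((ξ₀ (fromTL k K S L w))⁻¹ • ξ₀) (fromTL k K S L u)
    obtain ⟨a, ha⟩ := theta_surjective k K S L hsplit F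
    have hau : a • w = u := by
      rw [TL.smul_def, ha]
      show toTL k K S L (((ξ₀ (fromTL k K S L w))⁻¹ * ξ₀ (fromTL k K S L w)) •
        (fromTL k K S L u)) = u
      rw [inv_mul_cancel₀ hξ₀, one_smul]
      rfl
    rw [← hau]
    exact W.smul_mem a hwW
  have hnt : Nontrivial (Submodule (K ⊗[k] S) (TL k K S L)) := by
    refine ⟨⊥, ⊤, fun h => hv1 ?_⟩
    have h2 : toTL k K S L ((1:K) ⊗ₜ v) ∈ (⊤ : Submodule (K ⊗[k] S) (TL k K S L)) := trivial
    rw [← h] at h2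
    exact h2
  haveI : IsSimpleOrder (Submodule (K ⊗[k] S) (TL k K S L)) := ⟨fun W => (em (W = ⊥)).imp id (key W)⟩
  exact ⟨⟩

theorem TL.end_scalar (hsplit : Paper.IsSplitAlgebra k S) [IsSimpleModule S L]
    [FiniteDimensional k L] (g : TL k K S L →ₗ[K ⊗[k] S] TL k K S L) :
    ∃ c : K, ∀ x : TL k K S L, g x = algebraMap K (K ⊗[k] S) c • x := by
  haveI := IsSimpleModule.nontrivial S L
  set g' : Module.End K (K ⊗[k] L) :=
    { toFun := fun x => fromTL k K S L (g (toTL k K S L x))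
      map_add' := fun x y => congrArg (fromTL k K S L) (g.map_add (toTL k K S L x) (toTL k K S L y))
      map_smul' := fun c x => by
        simp only [RingHom.id_apply]
        show fromTL k K S L (g (toTL k K S L (c • x))) = c • fromTL k K S L (g (toTL k K S L x))
        have h1 : toTL k K S L (c • x) = algebraMap K (K ⊗[k] S) c • toTL k K S L x := by
          rw [TL.algebraMap_smul]; rfl
        rw [h1, g.map_smul, TL.algebraMap_smul]
        rfl } with hg'
  have hcomm : ∀ h : Module.End K (K ⊗[k] L), ∀ x, g' (h x) = h (g' x) := by
    intro h x
    obtain ⟨a, ha⟩ := theta_surjective k K S L hsplit h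
    have h1 : g (a • toTL k K S L x) = a • g (toTL k K S L x) := g.map_smul a _
    rw [TL.smul_def, TL.smul_def] at h1
    show fromTL k K S L (g (toTL k K S L (h x))) = h (fromTL k K S L (g (toTL k K S L x)))
    rw [← ha]
    exact congrArg (fromTL k K S L) h1
  -- every nonzero vector is an eigenvector of g'
  have key : ∀ x : K ⊗[k] L, x ≠ 0 → ∃ c : K, g' x = c • x := by
    intro x hx
    obtain ⟨ξ₀, hξ₀⟩ : ∃ ξ₀ : Module.Dual K (K ⊗[k] L), ξ₀ x ≠ 0 := by
      by_contra hc
      push_neg at hc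
      exact hx ((Module.forall_dual_apply_eq_zero_iff K x).1 hc)
    set P : Module.End K (K ⊗[k] L) := LinearMap.smulRight ((ξ₀ x)⁻¹ • ξ₀) x with hP
    have hPx : P x = x := by
      show ((ξ₀ x)⁻¹ * ξ₀ x) • x = x
      rw [inv_mul_cancel₀ hξ₀, one_smul]
    have h1 := hcomm P x
    rw [hPx] at h1
    refine ⟨((ξ₀ x)⁻¹ • ξ₀) (g' x), ?_⟩
    conv_lhs => rw [h1]
    rfl
  obtain ⟨v, hv⟩ := exists_ne (0 : L)
  have hv1 : ((1 : K) ⊗ₜ v : K ⊗[k] L) ≠ 0 := fun h => hv (eq_zero_of_one_tmul_eq_zero k K h)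
  obtain ⟨c, hc⟩ := key _ hv1
  set v₀ : K ⊗[k] L := (1 : K) ⊗ₜ v with hv₀def
  have main : ∀ y : K ⊗[k] L, g' y = c • y := by
    intro y
    by_cases hy : y = 0
    · rw [hy, map_zero, smul_zero]
    by_cases hsp : y ∈ (Submodule.span K {v₀})
    · obtain ⟨d, hd⟩ := Submodule.mem_span_singleton.1 hsp
      rw [← hd, map_smul, hc, smul_comm]
    · obtain ⟨cy, hcy⟩ := key y hy
      have hu0 : y + v₀ ≠ 0 := by
        intro h
        exact hsp ((eq_neg_of_add_eq_zero_left h) ▸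
          (Submodule.span K {v₀}).neg_mem (Submodule.mem_span_singleton_self v₀))
      obtain ⟨cu, hcu⟩ := key _ hu0
      have h4 : cu • y + cu • v₀ = cy • y + c • v₀ := by
        rw [← smul_add, ← hcu, map_add, hcy, hc]
      have hrel : (cu - cy) • y = (c - cu) • v₀ := by
        linear_combination (norm := module) h4
      have hcucy : cu = cy := by
        by_contra hne
        apply hsp
        have h5 : y = ((cu - cy)⁻¹ * (c - cu)) • v₀ := by
          rw [mul_smul, ← hrel, smul_smul, inv_mul_cancel₀ (sub_ne_zero.2 hne), one_smul]
        rw [h5]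
        exact Submodule.smul_mem _ _ (Submodule.mem_span_singleton_self v₀)
      have hccu : c = cu := by
        have h5 : (c - cu) • v₀ = 0 := by rw [← hrel, hcucy, sub_self, zero_smul]
        have h6 := (smul_eq_zero.1 h5).resolve_right hv1
        exact sub_eq_zero.1 h6
      rw [hcy, ← hcucy, ← hccu]
  refine ⟨c, fun x => ?_⟩
  have hx := main (fromTL k K S L x)
  rw [TL.algebraMap_smul, TL.ksmul_def]
  show g x = toTL k K S L (c • fromTL k K S L x)
  rw [← hx]
  rfl

end EngineB


section Spans
variable (k K S : Type) [Field k] [Field K] [Algebra k K] [Ring S] [Algebra k S]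

/-- The `K`-span in `K ⊗ S` of the image of a subset `W ⊆ S`. -/
noncomputable def NSpan (W : Set S) : Submodule K (K ⊗[k] S) :=
  Submodule.span K ((fun s => ((1 : K) ⊗ₜ s : K ⊗[k] S)) '' W)

variable {k K S}

theorem one_tmul_mem_NSpan {W : Set S} {s : S} (hs : s ∈ W) :
    ((1 : K) ⊗ₜ s : K ⊗[k] S) ∈ NSpan k K S W :=
  Submodule.subset_span ⟨s, hs, rfl⟩

theorem NSpan_mono {W W' : Set S} (h : W ⊆ W') : NSpan k K S W ≤ NSpan k K S W' :=
  Submodule.span_mono (Set.image_mono h)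

theorem NSpan_mul {I : Ideal S} {N : Submodule S S} {a b : K ⊗[k] S}
    (ha : a ∈ NSpan k K S (I : Set S)) (hb : b ∈ NSpan k K S (N : Set S)) :
    a * b ∈ NSpan k K S ((I • N : Submodule S S) : Set S) := by
  induction ha using Submodule.span_induction with
  | mem x hx =>
      obtain ⟨s, hsI, rfl⟩ := hx
      induction hb using Submodule.span_induction with
      | mem y hy =>
          obtain ⟨t, htN, rfl⟩ := hy
          rw [Algebra.TensorProduct.tmul_mul_tmul, mul_one]
          exact one_tmul_mem_NSpan (by
            have := Submodule.smul_mem_smul hsI htN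
            rwa [smul_eq_mul] at this)
      | zero => rw [mul_zero]; exact Submodule.zero_mem _
      | add y z _ _ hy hz => rw [mul_add]; exact Submodule.add_mem _ hy hz
      | smul c y _ hy => rw [mul_smul_comm]; exact Submodule.smul_mem _ _ hy
  | zero => rw [zero_mul]; exact Submodule.zero_mem _
  | add x y _ _ hx hy => rw [add_mul]; exact Submodule.add_mem _ hx hy
  | smul c x _ hx => rw [smul_mul_assoc]; exact Submodule.smul_mem _ _ hx

theorem NSpan_pow {x : K ⊗[k] S} (hx : x ∈ NSpan k K S ((⊥ : Ideal S).jacobson : Set S)) :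
    ∀ m : ℕ, x ^ m ∈ NSpan k K S ((Jpow S m : Ideal S) : Set S) := by
  intro m
  induction m with
  | zero =>
      rw [pow_zero]
      exact one_tmul_mem_NSpan (by trivial)
  | succ m IH =>
      rw [pow_succ']
      have := NSpan_mul hx IH
      rwa [show (⊥ : Ideal S).jacobson • Jpow S m = Jpow S (m + 1) from (by rw [Jpow])] at this

theorem NSpan_nilpotent {kk : Type} [Field kk] [Algebra kk S] [FiniteDimensional kk S]
    {x : K ⊗[k] S} (hx : x ∈ NSpan k K S ((⊥ : Ideal S).jacobson : Set S)) : IsNilpotent x := by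
  obtain ⟨n, hn⟩ := jpow_eq_bot (k := kk) (S := S)
  refine ⟨n, ?_⟩
  have h1 := NSpan_pow hx n
  rw [hn] at h1
  have h2 : NSpan k K S ((⊥ : Ideal S) : Set S) ≤ ⊥ := by
    rw [NSpan, Submodule.span_le]
    rintro y ⟨s, hs, rfl⟩
    have hs0 : s = 0 := by simpa using hs
    simp [hs0]
  simpa using h2 h1

theorem NSpan_mul_left {x : K ⊗[k] S} (y : K ⊗[k] S)
    (hx : x ∈ NSpan k K S ((⊥ : Ideal S).jacobson : Set S)) :
    y * x ∈ NSpan k K S ((⊥ : Ideal S).jacobson : Set S) := by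
  induction hx using Submodule.span_induction with
  | mem z hz =>
      obtain ⟨s, hsJ, rfl⟩ := hz
      induction y with
      | zero => rw [zero_mul]; exact Submodule.zero_mem _
      | tmul c t =>
          rw [Algebra.TensorProduct.tmul_mul_tmul]
          have h1 : (c ⊗ₜ (t * s) : K ⊗[k] S) = c • ((1 : K) ⊗ₜ (t * s)) := by
            rw [TensorProduct.smul_tmul', smul_eq_mul, mul_one]
          rw [mul_one, h1]
          exact Submodule.smul_mem _ _ (one_tmul_mem_NSpan
            (by simpa [smul_eq_mul] using ((⊥ : Ideal S).jacobson.smul_mem t hsJ)))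
      | add y₁ y₂ h₁ h₂ => rw [add_mul]; exact Submodule.add_mem _ h₁ h₂
  | zero => rw [mul_zero]; exact Submodule.zero_mem _
  | add x₁ x₂ _ _ h₁ h₂ => rw [mul_add]; exact Submodule.add_mem _ h₁ h₂
  | smul c z _ hz => rw [mul_smul_comm]; exact Submodule.smul_mem _ _ hz

/-- `K ⊗ J(S) ⊆ J(K ⊗ S)`. -/
theorem NSpan_jacobson_le [FiniteDimensional k S] {x : K ⊗[k] S}
    (hx : x ∈ NSpan k K S ((⊥ : Ideal S).jacobson : Set S)) :
    x ∈ (⊥ : Ideal (K ⊗[k] S)).jacobson := by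
  apply mem_jacobson_bot_of_forall
  intro y
  exact IsNilpotent.isUnit_one_add (NSpan_nilpotent (kk := k) (NSpan_mul_left y hx))

/-- The commutator span of `K ⊗ S` equals the `K`-span of the image of the commutator span. -/
theorem commutatorSpan_eq :
    Paper.commutatorSpan K (K ⊗[k] S)
      = NSpan k K S ((Paper.commutatorSpan k S : Submodule k S) : Set S) := by
  apply le_antisymm
  · rw [Paper.commutatorSpan, Submodule.span_le]
    rintro z ⟨x, y, rfl⟩
    show x * y - y * x ∈ NSpan k K S _
    induction x with
    | zero => simpa using Submodule.zero_mem _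
    | add x₁ x₂ h₁ h₂ =>
        have he : (x₁ + x₂) * y - y * (x₁ + x₂)
            = (x₁ * y - y * x₁) + (x₂ * y - y * x₂) := by
          rw [add_mul, mul_add]; abel
        rw [he]; exact Submodule.add_mem _ h₁ h₂
    | tmul c s =>
        induction y with
        | zero => simpa using Submodule.zero_mem _
        | add y₁ y₂ h₁ h₂ =>
            have he : (c ⊗ₜ[k] s) * (y₁ + y₂) - (y₁ + y₂) * (c ⊗ₜ[k] s)
                = ((c ⊗ₜ[k] s) * y₁ - y₁ * (c ⊗ₜ[k] s))
                  + ((c ⊗ₜ[k] s) * y₂ - y₂ * (c ⊗ₜ[k] s)) := by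
              rw [add_mul, mul_add]; abel
            rw [he]; exact Submodule.add_mem _ h₁ h₂
        | tmul d t =>
            rw [Algebra.TensorProduct.tmul_mul_tmul, Algebra.TensorProduct.tmul_mul_tmul,
              mul_comm d c, ← TensorProduct.tmul_sub]
            have h1 : ((c * d) ⊗ₜ (s * t - t * s) : K ⊗[k] S)
                = (c * d) • ((1 : K) ⊗ₜ (s * t - t * s)) := by
              rw [TensorProduct.smul_tmul', smul_eq_mul, mul_one]
            rw [h1]
            exact Submodule.smul_mem _ _ (one_tmul_mem_NSpan
              (Submodule.subset_span ⟨s, t, rfl⟩))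
  · have key : ∀ v ∈ Paper.commutatorSpan k S,
        ((1:K) ⊗ₜ v : K ⊗[k] S) ∈ Paper.commutatorSpan K (K ⊗[k] S) := by
      intro v hv
      induction hv using Submodule.span_induction with
      | mem u hu =>
          obtain ⟨a, b, rfl⟩ := hu
          rw [TensorProduct.tmul_sub]
          have h1 : ((1:K) ⊗ₜ (a * b) : K ⊗[k] S) = ((1:K) ⊗ₜ a) * ((1:K) ⊗ₜ b) := by
            rw [Algebra.TensorProduct.tmul_mul_tmul, mul_one]
          have h2 : ((1:K) ⊗ₜ (b * a) : K ⊗[k] S) = ((1:K) ⊗ₜ b) * ((1:K) ⊗ₜ a) := by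
            rw [Algebra.TensorProduct.tmul_mul_tmul, mul_one]
          rw [h1, h2]
          exact Submodule.subset_span ⟨(1:K) ⊗ₜ a, (1:K) ⊗ₜ b, rfl⟩
      | zero => simpa using Submodule.zero_mem _
      | add u w _ _ hu hw => rw [TensorProduct.tmul_add]; exact Submodule.add_mem _ hu hw
      | smul c u _ hu =>
          rw [TensorProduct.tmul_smul, ← algebraMap_smul K c ((1:K) ⊗ₜ[k] u : K ⊗[k] S)]
          exact Submodule.smul_mem _ _ hu
    rw [NSpan, Submodule.span_le]
    rintro z ⟨v, hv, rfl⟩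
    exact key v hv

/-- Descent: if `1 ⊗ x` lies in the `K`-span of `1 ⊗ P` then `x ∈ P`. -/
theorem descent (P : Submodule k S) {x : S}
    (hx : ((1 : K) ⊗ₜ x : K ⊗[k] S) ∈ NSpan k K S (P : Set S)) : x ∈ P := by
  set Q := LinearMap.baseChange K P.mkQ with hQ
  have h1 : NSpan k K S (P : Set S) ≤ LinearMap.ker (Q.restrictScalars K) := by
    rw [NSpan, Submodule.span_le]
    rintro z ⟨v, hv, rfl⟩
    rw [SetLike.mem_coe, LinearMap.mem_ker, LinearMap.restrictScalars_apply, hQ,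
      LinearMap.baseChange_tmul]
    have h2 : P.mkQ v = 0 := by rwa [Submodule.mkQ_apply, Submodule.Quotient.mk_eq_zero]
    rw [h2, TensorProduct.tmul_zero]
  have h3 := h1 hx
  rw [LinearMap.mem_ker, LinearMap.restrictScalars_apply, hQ,
    LinearMap.baseChange_tmul] at h3
  have h4 := eq_zero_of_one_tmul_eq_zero k K h3
  rwa [Submodule.mkQ_apply, Submodule.Quotient.mk_eq_zero] at h4

end Spans




section Main
variable {k K S : Type} [Field k] [Field K] [Algebra k K] [Ring S] [Algebra k S]

theorem jacobson_le_nspan [FiniteDimensional k S] (hsplit : Paper.IsSplitAlgebra k S) {a : K ⊗[k] S}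
    (ha : a ∈ (⊥ : Ideal (K ⊗[k] S)).jacobson) :
    a ∈ NSpan k K S ((⊥ : Ideal S).jacobson : Set S) := by
  classical
  have h0 : a ∈ Submodule.span K ((fun w => ((1:K) ⊗ₜ w : K ⊗[k] S)) ''
      (((⊥ : Ideal S).jacobson.restrictScalars k : Submodule k S) : Set S)) := by
    apply mem_span_one_tmul_of_chi
    intro i
    show chi k K i a ∈ (⊥ : Ideal S).jacobson
    rw [Ideal.jacobson, Submodule.mem_sInf]
    rintro m ⟨-, hmM⟩
    haveI : Ideal.IsMaximal m := hmM
    haveI : IsSimpleModule S (S ⧸ m) := isSimpleModule_iff_isCoatom.2 (Ideal.isMaximal_def.1 hmM)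
    haveI : SMulCommClass S k (S ⧸ m) := smulCommClass_of_tower (k := k) (S := S) (L := S ⧸ m)
    have hone : (Submodule.Quotient.mk (1:S) : S ⧸ m) ≠ 0 := by
      rw [Ne, Submodule.Quotient.mk_eq_zero]
      intro h1
      exact hmM.ne_top ((Ideal.eq_top_iff_one m).2 h1)
    set w : TL k K S (S ⧸ m) := toTL k K S (S ⧸ m) ((1:K) ⊗ₜ (Submodule.Quotient.mk 1)) with hw
    have hw0 : w ≠ 0 := fun h => hone (eq_zero_of_one_tmul_eq_zero k K h)
    haveI := TL.isSimple k K S (S ⧸ m) hsplit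
    have hmax := IsSimpleModule.ker_toSpanSingleton_isMaximal (K ⊗[k] S) hw0
    have haw : a • w = 0 := by
      have h3 : (⊥ : Ideal (K ⊗[k] S)).jacobson
          ≤ LinearMap.ker (LinearMap.toSpanSingleton (K ⊗[k] S) _ w) :=
        sInf_le ⟨bot_le, hmax⟩
      have h2 := h3 ha
      rwa [LinearMap.mem_ker, LinearMap.toSpanSingleton_apply] at h2
    obtain ⟨F, hF0, hFr⟩ := chi_repr k K a
    by_cases hiF : i ∈ F
    · -- compute the action of a on w
      have hcomp : Theta k K S (S ⧸ m) a ((1:K) ⊗ₜ (Submodule.Quotient.mk 1))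
          = ∑ i' ∈ F, (bK k K i' : K) ⊗ₜ (Submodule.Quotient.mk (chi k K i' a) : S ⧸ m) := by
        conv_lhs => rw [hFr]
        rw [map_sum, LinearMap.coe_sum, Finset.sum_apply]
        refine Finset.sum_congr rfl fun i' _ => ?_
        rw [Theta_tmul, mul_one]
        congr 1
        rw [← Submodule.Quotient.mk_smul, smul_eq_mul, mul_one]
      have h5 : (0 : K ⊗[k] (S ⧸ m))
          = ∑ i' ∈ F, (bK k K i' : K) ⊗ₜ (Submodule.Quotient.mk (chi k K i' a) : S ⧸ m) := by
        rw [← hcomp]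
        have h6 : fromTL k K S (S ⧸ m) (a • w) = fromTL k K S (S ⧸ m) 0 := congrArg _ haw
        rw [TL.smul_def] at h6
        exact h6.symm.trans rfl
      have h6 := congrArg (chi k K i) h5
      rw [map_zero, map_sum] at h6
      have h7 : ∀ i' ∈ F,
          chi k K i ((bK k K i' : K) ⊗ₜ (Submodule.Quotient.mk (chi k K i' a) : S ⧸ m))
          = if i' = i then (Submodule.Quotient.mk (chi k K i' a) : S ⧸ m) else 0 := by
        intro i' _
        rw [chi_tmul, Module.Basis.repr_self, Finsupp.single_apply]
        by_cases h : i' = i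
        · rw [if_pos h, if_pos h, one_smul]
        · rw [if_neg h, if_neg h, zero_smul]
      rw [Finset.sum_congr rfl h7,
        Finset.sum_ite_eq' F i (fun i' => (Submodule.Quotient.mk (chi k K i' a) : S ⧸ m)),
        if_pos hiF] at h6
      have h8 : (Submodule.Quotient.mk (chi k K i a) : S ⧸ m) = 0 := h6.symm
      rwa [Submodule.Quotient.mk_eq_zero] at h8
    · rw [hF0 i hiF]
      exact m.zero_mem
  simpa [NSpan] using h0

set_option maxHeartbeats 1000000 in
/-- Splitness of the base change. -/
theorem split_base_change [FiniteDimensional k S] (hsplit : Paper.IsSplitAlgebra k S) :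
    Paper.IsSplitAlgebra K (K ⊗[k] S) := by
  intro M _ _ hMsimple f
  haveI : IsSimpleModule (K ⊗[k] S) M := hMsimple
  haveI hMnt : Nontrivial M := IsSimpleModule.nontrivial (K ⊗[k] S) M
  letI modS : Module S M :=
    Module.compHom M (Algebra.TensorProduct.includeRight : S →ₐ[k] K ⊗[k] S).toRingHom
  have smulS_def : ∀ (s : S) (x : M),
      s • x = ((1:K) ⊗ₜ s : K ⊗[k] S) • x := fun s x => rfl
  obtain ⟨v, hv⟩ := exists_ne (0 : M)
  -- the cyclic submodule S•v, presented as a quotient of S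
  set q : Ideal S := LinearMap.ker (LinearMap.toSpanSingleton S M v) with hq
  set eU : (S ⧸ q) →ₗ[S] M := q.liftQ (LinearMap.toSpanSingleton S M v) le_rfl with heU
  have heU_inj : Function.Injective eU := by
    rw [← LinearMap.ker_eq_bot, heU]
    exact Submodule.ker_liftQ_eq_bot q _ le_rfl le_rfl
  have hUnt : Nontrivial (S ⧸ q) := by
    refine ⟨Submodule.Quotient.mk 1, 0, fun h => hv ?_⟩
    have h2 : eU (Submodule.Quotient.mk 1) = eU 0 := congrArg _ h
    rw [map_zero, heU, Submodule.liftQ_apply, LinearMap.toSpanSingleton_apply, one_smul] at h2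
    exact h2
  -- find a simple S-submodule of S ⧸ q
  haveI : IsArtinian S (S ⧸ q) := isArtinian_of_tower k inferInstance
  obtain ⟨L₀, hL₀atom, -⟩ :=
    (eq_bot_or_exists_atom_le (⊤ : Submodule S (S ⧸ q))).resolve_left top_ne_bot
  haveI hL₀simple : IsSimpleModule S ↥L₀ := isSimpleModule_iff_isAtom.2 hL₀atom
  haveI : SMulCommClass S k ↥L₀ := smulCommClass_of_tower (k := k) (S := S) (L := ↥L₀)
  haveI : FiniteDimensional k ↥L₀ :=
    FiniteDimensional.of_injective (L₀.subtype.restrictScalars k) L₀.injective_subtype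
  set ι : ↥L₀ →ₗ[S] M := eU.comp L₀.subtype with hι
  have hι_inj : Function.Injective ι := heU_inj.comp L₀.injective_subtype
  -- K and k actions on M
  letI modK : Module K M := Module.compHom M (algebraMap K (K ⊗[k] S))
  have smulK_def : ∀ (c : K) (x : M), c • x = algebraMap K (K ⊗[k] S) c • x := fun c x => rfl
  letI modk : Module k M := Module.compHom M (algebraMap k (K ⊗[k] S))
  have smulk_def : ∀ (c : k) (x : M), c • x = algebraMap k (K ⊗[k] S) c • x := fun c x => rfl
  -- the comparison map
  set B : K →ₗ[k] ↥L₀ →ₗ[k] M :=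
    { toFun := fun c =>
        { toFun := fun z => c • (ι z : M)
          map_add' := fun z₁ z₂ => by
            show c • (ι (z₁ + z₂) : M) = c • (ι z₁ : M) + c • (ι z₂ : M)
            rw [map_add, smul_add]
          map_smul' := fun d z => by
            show c • (ι (d • z) : M) = d • (c • (ι z : M))
            have h1 : ι (d • z) = algebraMap k S d • ι z := by
              rw [← algebraMap_smul S d z, map_smul]
            have h2 : ((1:K) ⊗ₜ algebraMap k S d : K ⊗[k] S) = algebraMap k (K ⊗[k] S) d :=
              (Algebra.TensorProduct.includeRight.commutes d)
            have h3 : algebraMap K (K ⊗[k] S) c * algebraMap k (K ⊗[k] S) d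
                = algebraMap k (K ⊗[k] S) d * algebraMap K (K ⊗[k] S) c := by
              rw [IsScalarTower.algebraMap_apply k K (K ⊗[k] S)]
              exact Algebra.commutes c _
            simp only [h1, smulS_def, smulK_def, smulk_def, smul_smul, h2, h3] }
      map_add' := fun c₁ c₂ => by
        refine LinearMap.ext fun z => ?_
        show (c₁ + c₂) • (ι z : M) = c₁ • ι z + c₂ • ι z
        rw [add_smul]
      map_smul' := fun d c => by
        refine LinearMap.ext fun z => ?_
        show (d • c) • (ι z : M) = d • (c • ι z)
        rw [smulK_def, smulK_def, smulk_def, Algebra.smul_def d c,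
          map_mul, ← IsScalarTower.algebraMap_apply k K (K ⊗[k] S), mul_smul] } with hB
  set bigB : K ⊗[k] ↥L₀ →ₗ[k] M := TensorProduct.lift B with hbigB
  have hbigB_tmul : ∀ (c : K) (z : ↥L₀), bigB (c ⊗ₜ z) = c • (ι z : M) := fun c z => rfl
  -- A-linearity
  have hPsi_smul : ∀ (a : K ⊗[k] S) (x : K ⊗[k] ↥L₀),
      bigB (Theta k K S ↥L₀ a x) = a • bigB x := by
    intro a x
    induction a with
    | zero => rw [map_zero, LinearMap.zero_apply, map_zero, zero_smul]
    | add a₁ a₂ h₁ h₂ => rw [map_add, LinearMap.add_apply, map_add, h₁, h₂, add_smul]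
    | tmul c s =>
        induction x with
        | zero => rw [map_zero, map_zero, smul_zero]
        | add x₁ x₂ h₁ h₂ => rw [map_add, map_add, h₁, h₂, map_add, smul_add]
        | tmul d z =>
            rw [Theta_tmul, hbigB_tmul, hbigB_tmul]
            have h1 : ι (s • z) = s • (ι z : M) := map_smul ι s z
            have hA : ∀ e : K, algebraMap K (K ⊗[k] S) e = (e ⊗ₜ 1 : K ⊗[k] S) := fun e => rfl
            simp only [h1, smulS_def, smulK_def, smul_smul]
            congr 1
            rw [hA, hA, Algebra.TensorProduct.tmul_mul_tmul, Algebra.TensorProduct.tmul_mul_tmul,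
              mul_one, one_mul, mul_one]
  -- the bundled A-linear map
  set Psi : TL k K S ↥L₀ →ₗ[K ⊗[k] S] M :=
    { toFun := fun x => bigB (fromTL k K S ↥L₀ x)
      map_add' := fun x y => bigB.map_add _ _
      map_smul' := fun a x => by
        rw [RingHom.id_apply, TL.smul_def]
        exact hPsi_smul a (fromTL k K S ↥L₀ x) } with hPsi
  haveI := TL.isSimple k K S ↥L₀ hsplit
  have hPsi_ne : Psi ≠ 0 := by
    haveI : Nontrivial ↥L₀ := IsSimpleModule.nontrivial S ↥L₀
    obtain ⟨z₀, hz₀⟩ := exists_ne (0 : ↥L₀)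
    intro h0
    have h1 : Psi (toTL k K S ↥L₀ ((1:K) ⊗ₜ z₀)) = 0 := by rw [h0]; rfl
    have h2 : (1:K) • (ι z₀ : M) = 0 := h1
    rw [one_smul] at h2
    exact hz₀ (hι_inj (by rw [h2, map_zero]))
  have hPsi_bij := LinearMap.bijective_of_ne_zero hPsi_ne
  set e := LinearEquiv.ofBijective Psi hPsi_bij with he
  set g : TL k K S ↥L₀ →ₗ[K ⊗[k] S] TL k K S ↥L₀ :=
    (e.symm.toLinearMap.comp f).comp e.toLinearMap with hg
  obtain ⟨c, hc⟩ := TL.end_scalar k K S ↥L₀ hsplit g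
  refine ⟨c, fun x => ?_⟩
  have h1 : g (e.symm x) = algebraMap K (K ⊗[k] S) c • e.symm x := hc _
  rw [hg] at h1
  simp only [LinearMap.coe_comp, Function.comp_apply, LinearEquiv.coe_coe,
    LinearEquiv.apply_symm_apply] at h1
  have h2 := congrArg e h1
  rw [LinearEquiv.apply_symm_apply, map_smul, LinearEquiv.apply_symm_apply] at h2
  exact h2

end Main

end StmtTwo

open Paper in
/-- Section 2, (6): for an extension field `K` of `k`, the `K`-algebra `S_K = K ⊗_k S` is
split, and `S_K` is constrained if and only if `S` is constrained. -/
theorem statement2 (k K S : Type) [Field k] [Field K] [Algebra k K]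
    [Ring S] [Algebra k S] [FiniteDimensional k S]
    (hsplit : IsSplitAlgebra k S) :
    IsSplitAlgebra K (K ⊗[k] S) ∧ (IsConstrained K (K ⊗[k] S) ↔ IsConstrained k S) := by
  refine ⟨StmtTwo.split_base_change hsplit, ?_, ?_⟩
  · -- constrained downstairs from constrained upstairs
    intro hA x hx
    have h1 : ((1:K) ⊗ₜ x : K ⊗[k] S) ∈ StmtTwo.NSpan k K S ((⊥ : Ideal S).jacobson : Set S) :=
      StmtTwo.one_tmul_mem_NSpan hx
    have h2 := StmtTwo.NSpan_jacobson_le h1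
    have h3 : ((1:K) ⊗ₜ x : K ⊗[k] S) ∈ commutatorSpan K (K ⊗[k] S) := hA h2
    rw [StmtTwo.commutatorSpan_eq] at h3
    exact StmtTwo.descent (commutatorSpan k S) h3
  · -- constrained upstairs from constrained downstairs
    intro hS a ha
    have h1 := StmtTwo.jacobson_le_nspan hsplit ha
    have h2 : StmtTwo.NSpan k K S ((⊥ : Ideal S).jacobson : Set S)
        ≤ StmtTwo.NSpan k K S ((commutatorSpan k S : Submodule k S) : Set S) :=
      StmtTwo.NSpan_mono hS
    have h3 := h2 h1
    rw [← StmtTwo.commutatorSpan_eq] at h3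
    exact h3
end

section
/- Let k be a field and S a finite-dimensional split k-algebra which is constrained. If V_1, …, V_n is a complete set of pairwise non-isomorphic simple left S-modules, then their natural characters χ_{V_1}, …, χ_{V_n} form a k-basis of C(S) = {f ∈ S* : f vanishes on [S,S]}. -/
open TensorProduct

namespace Statement3Aux
open Paper Matrix

variable {k : Type} [Field k]

lemma comm_mem {A : Type*} [Ring A] [Algebra k A] (x y : A) :
    x * y - y * x ∈ commutatorSpan k A :=
  Submodule.subset_span ⟨x, y, rfl⟩

lemma matrix_mem_commutatorSpan {d : ℕ} (A : Matrix (Fin d) (Fin d) k) (hA : A.trace = 0) :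
    A ∈ commutatorSpan k (Matrix (Fin d) (Fin d) k) := by
  rcases Nat.eq_zero_or_pos d with hd | hd
  · have : A = 0 := by ext i; exact absurd i.2 (by omega)
    simp [this]
  · set z : Fin d := ⟨0, hd⟩ with hz
    have h1 : ∀ (i j : Fin d), i ≠ j → ∀ c : k,
        Matrix.single i j c ∈ commutatorSpan k (Matrix (Fin d) (Fin d) k) := by
      intro i j hij c
      have := comm_mem (k := k) (Matrix.single i i (1:k)) (Matrix.single i j c)
      rwa [Matrix.single_mul_single_same, one_mul,
        Matrix.single_mul_single_of_ne (h := hij.symm), sub_zero] at this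
    have h2 : ∀ (i : Fin d) (c : k),
        Matrix.single i i c - Matrix.single z z c
          ∈ commutatorSpan k (Matrix (Fin d) (Fin d) k) := by
      intro i c
      have := comm_mem (k := k) (Matrix.single i z c) (Matrix.single z i (1:k))
      rwa [Matrix.single_mul_single_same, Matrix.single_mul_single_same, mul_one, one_mul]
        at this
    classical
    set g : Fin d → Fin d → Matrix (Fin d) (Fin d) k := fun i j =>
      if i = j then Matrix.single i i (A i i) - Matrix.single z z (A i i)
      else Matrix.single i j (A i j) with hgdef
    have hg' : ∀ i j, g i j = Matrix.single i j (A i j) -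
        (if i = j then Matrix.single z z (A i i) else 0) := by
      intro i j
      by_cases h : i = j
      · subst h; simp [hgdef]
      · simp [hgdef, h]
    have htr : ∑ i, A i i = 0 := by simpa [Matrix.trace, Matrix.diag] using hA
    have hzero : ∑ i, Matrix.single z z (A i i) = 0 := by
      have h1' : ∀ i : Fin d, Matrix.single z z (A i i)
          = A i i • Matrix.single z z (1:k) := by
        intro i; rw [Matrix.smul_single, smul_eq_mul, mul_one]
      rw [Finset.sum_congr rfl fun i _ => h1' i, ← Finset.sum_smul, htr, zero_smul]
    have hrepr : A = ∑ i, ∑ j, g i j := by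
      calc A = ∑ i, ∑ j, Matrix.single i j (A i j) := matrix_eq_sum_single A
        _ = ∑ i, ∑ j, (g i j + (if i = j then Matrix.single z z (A i i) else 0)) := by
            refine Finset.sum_congr rfl fun i _ => Finset.sum_congr rfl fun j _ => ?_
            rw [hg', sub_add_cancel]
        _ = (∑ i, ∑ j, g i j)
            + ∑ i, ∑ j, (if i = j then Matrix.single z z (A i i) else 0) := by
            rw [← Finset.sum_add_distrib]
            refine Finset.sum_congr rfl fun i _ => ?_
            rw [← Finset.sum_add_distrib]
        _ = ∑ i, ∑ j, g i j := by
            have : ∀ i : Fin d,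
                (∑ j, if i = j then Matrix.single z z (A i i) else 0)
                  = Matrix.single z z (A i i) := by
              intro i; rw [Finset.sum_ite_eq]; simp
            rw [Finset.sum_congr rfl fun i _ => this i, hzero, add_zero]
    rw [hrepr]
    refine Submodule.sum_mem _ fun i _ => Submodule.sum_mem _ fun j _ => ?_
    by_cases h : i = j
    · subst h; simpa [hgdef] using h2 i (A i i)
    · simpa [hgdef, h] using h1 i j h (A i j)

lemma algEquiv_symm_mem_commutatorSpan {A B : Type*} [Ring A] [Ring B] [Algebra k A]
    [Algebra k B] (e : A ≃ₐ[k] B) {y : B} (hy : y ∈ commutatorSpan k B) :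
    e.symm y ∈ commutatorSpan k A := by
  induction hy using Submodule.span_induction with
  | mem x hx =>
      obtain ⟨a, b, rfl⟩ := hx
      rw [map_sub, _root_.map_mul, _root_.map_mul]
      exact comm_mem _ _
  | zero => simp
  | add x y _ _ hx hy => rw [map_add]; exact Submodule.add_mem _ hx hy
  | smul c x _ hx =>
      rw [_root_.map_smul]
      exact Submodule.smul_mem _ _ hx

lemma end_trace_zero_mem {V : Type} [AddCommGroup V] [Module k V] [FiniteDimensional k V]
    (φ : Module.End k V) (h : LinearMap.trace k V φ = 0) :
    φ ∈ commutatorSpan k (Module.End k V) := by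
  classical
  let b := Module.finBasis k V
  let e := LinearMap.toMatrixAlgEquiv b
  have hm : e φ ∈ commutatorSpan k (Matrix (Fin (Module.finrank k V)) (Fin (Module.finrank k V)) k) := by
    apply matrix_mem_commutatorSpan
    have : (LinearMap.toMatrix b b φ).trace = 0 := by
      rw [← LinearMap.trace_eq_matrix_trace k b φ]; exact h
    simpa [e, LinearMap.toMatrixAlgEquiv] using this
  have := algEquiv_symm_mem_commutatorSpan e hm
  rwa [AlgEquiv.symm_apply_apply] at this

lemma exists_trace_one {V : Type} [AddCommGroup V] [Module k V] [FiniteDimensional k V]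
    [Nontrivial V] : ∃ e : Module.End k V, LinearMap.trace k V e = 1 := by
  classical
  let b := Module.finBasis k V
  have hd : 0 < Module.finrank k V := Module.finrank_pos
  let z : Fin (Module.finrank k V) := ⟨0, hd⟩
  refine ⟨Matrix.toLin b b (Matrix.single z z 1), ?_⟩
  rw [LinearMap.trace_eq_matrix_trace k b, LinearMap.toMatrix_toLin,
    Matrix.trace_single_eq_same]

lemma eq_smul_trace {V : Type} [AddCommGroup V] [Module k V] [FiniteDimensional k V]
    [Nontrivial V] (g : Module.End k V →ₗ[k] k)
    (hg : ∀ x ∈ commutatorSpan k (Module.End k V), g x = 0) :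
    ∃ c : k, ∀ φ : Module.End k V, g φ = c * LinearMap.trace k V φ := by
  obtain ⟨e, he⟩ := exists_trace_one (k := k) (V := V)
  refine ⟨g e, fun φ => ?_⟩
  have h0 : g (φ - LinearMap.trace k V φ • e) = 0 := by
    apply hg
    apply end_trace_zero_mem
    rw [map_sub, _root_.map_smul, he, smul_eq_mul, mul_one, sub_self]
  rw [map_sub, _root_.map_smul, smul_eq_mul, sub_eq_zero] at h0
  rw [h0, mul_comm]

end Statement3Aux

namespace Statement3Aux2
open Paper

variable {k S : Type} [Field k] [Ring S] [Algebra k S]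

lemma density (hsplit : IsSplitAlgebra k S) {n : ℕ} (W : Fin n → FDModule k S)
    (hsimple : ∀ i, IsSimpleModule S (W i).V)
    (hpair : ∀ i j, i ≠ j → ¬ Nonempty ((W i).V ≃ₗ[S] (W j).V))
    (Φ : ∀ i, Module.End k (W i).V) :
    ∃ s : S, ∀ i (v : (W i).V), s • v = Φ i v := by
  classical
  haveI := fun i => hsimple i
  let b : ∀ i, Module.Basis (Fin (Module.finrank k (W i).V)) k (W i).V :=
    fun i => Module.finBasis k (W i).V
  let ι : Type := Σ i : Fin n, Fin (Module.finrank k (W i).V)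
  let F : ι → Type := fun p => (W p.1).V
  -- M := ∀ p, F p  is a semisimple S-module
  haveI hss : IsSemisimpleModule S (∀ p, F p) := by
    refine isSemisimpleModule_of_isSemisimpleModule_submodule'
      (p := fun p : ι => LinearMap.range (LinearMap.single S F p)) (fun p => ?_) ?_
    · haveI : IsSimpleModule S (F p) := hsimple p.1
      exact IsSemisimpleModule.congr
        (LinearEquiv.ofInjective (LinearMap.single S F p)
          (Pi.single_injective p)).symm
    · simp_rw [LinearMap.range_eq_map, Submodule.iSup_map_single, Submodule.pi_top]
  let w : ∀ p, F p := fun p => b p.1 p.2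
  set N : Submodule S (∀ p, F p) := Submodule.span S {w} with hN
  obtain ⟨N', hN'⟩ := exists_isCompl N
  let g : (∀ p, F p) →ₗ[S] (∀ p, F p) := N.subtype ∘ₗ N.projectionOnto N' hN'
  have hwN : w ∈ N := Submodule.mem_span_singleton_self w
  have hgw : g w = w := by
    show (N.subtype) (N.projectionOnto N' hN' w) = w
    rw [show w = ((⟨w, hwN⟩ : N) : ∀ p, F p) from rfl,
      Submodule.projectionOnto_apply_left]
    rfl
  have hgN : ∀ x, g x ∈ N := fun x => (N.projectionOnto N' hN' x).2
  let Φ' : (∀ p, F p) →ₗ[k] (∀ p, F p) :=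
    LinearMap.pi fun p => (Φ p.1).comp (LinearMap.proj p)
  -- key commutation on single elements
  have hsingle : ∀ (q : ι) (v : F q) (p : ι),
      Φ p.1 (g (Pi.single q v) p) = g (Pi.single q (Φ q.1 v)) p := by
    rintro ⟨j, bq⟩ v ⟨i, ap⟩
    let f : (W j).V →ₗ[S] (W i).V :=
      LinearMap.proj (⟨i, ap⟩ : ι) ∘ₗ g ∘ₗ LinearMap.single S F ⟨j, bq⟩
    show Φ i (f v) = f (Φ j v)
    by_cases hij : i = j
    · subst hij
      obtain ⟨c, hc⟩ := hsplit (W i).V (hsimple i) f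
      have hc' : ∀ x : (W i).V, f x = c • x := by
        intro x; rw [hc x, algebraMap_smul]
      rw [hc', hc', _root_.map_smul]
    · have hf : f = 0 := by
        by_contra hf0
        haveI : IsSimpleModule S (W j).V := hsimple j
        haveI : IsSimpleModule S (W i).V := hsimple i
        exact hpair j i (Ne.symm hij)
          ⟨LinearEquiv.ofBijective f (LinearMap.bijective_of_ne_zero hf0)⟩
      simp [hf]
  have hcomm : ∀ x, g (Φ' x) = Φ' (g x) := by
    intro x
    have hx : x = ∑ q, Pi.single q (x q) := (Finset.univ_sum_single x).symm
    rw [hx, map_sum, map_sum, map_sum, map_sum]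
    refine Finset.sum_congr rfl fun q _ => ?_
    have hΦs : ∀ (v : F q), Φ' (Pi.single q v) = Pi.single q (Φ q.1 v) := by
      intro v; funext p
      by_cases hp : p = q
      · subst hp; simp [Φ', LinearMap.pi_apply]
      · simp [Φ', LinearMap.pi_apply, Pi.single_eq_of_ne hp]
    rw [hΦs]
    funext p
    have : Φ' (g (Pi.single q (x q))) p = Φ p.1 (g (Pi.single q (x q)) p) := by
      simp [Φ', LinearMap.pi_apply]
    rw [this, hsingle]
  have hΦw : Φ' w ∈ N := by
    have : Φ' w = g (Φ' w) := by rw [hcomm, hgw]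
    rw [this]; exact hgN _
  obtain ⟨s, hs⟩ := Submodule.mem_span_singleton.mp hΦw
  refine ⟨s, fun i v => ?_⟩
  -- s • (b i a) = Φ i (b i a) for all a
  have hbasis : ∀ a : Fin (Module.finrank k (W i).V), s • b i a = Φ i (b i a) := by
    intro a
    have := congrFun hs (⟨i, a⟩ : ι)
    simpa [Φ', LinearMap.pi_apply, w] using this
  -- both sides k-linear in v
  have : (Algebra.lsmul k k (W i).V s : Module.End k (W i).V) = Φ i := by
    apply (b i).ext
    intro a
    rw [Algebra.lsmul_coe]
    exact hbasis a
  calc s • v = (Algebra.lsmul k k (W i).V s) v := by rw [Algebra.lsmul_coe]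
    _ = Φ i v := by rw [this]

end Statement3Aux2

open Paper in
/-- Section 2, (3): if `S` is constrained and `V_1, …, V_n` is a complete set of pairwise
non-isomorphic simple left `S`-modules, then the natural characters `χ_{V_1}, …, χ_{V_n}`
form a `k`-basis of `C(S) = [S,S]^⊥ ⊆ S*`. -/
theorem statement3 (k S : Type) [Field k] [Ring S] [Algebra k S] [FiniteDimensional k S]
    (hsplit : IsSplitAlgebra k S) (hcon : IsConstrained k S)
    (n : ℕ) (W : Fin n → FDModule k S)
    (hsimple : ∀ i, IsSimpleModule S (W i).V)
    (hpair : ∀ i j, i ≠ j → ¬ Nonempty ((W i).V ≃ₗ[S] (W j).V))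
    (hcomplete : ∀ (L : Type) [AddCommGroup L] [Module S L], IsSimpleModule S L →
      ∃ i, Nonempty ((W i).V ≃ₗ[S] L)) :
    LinearIndependent k (fun i => natChar (W i)) ∧
      Submodule.span k (Set.range fun i => natChar (W i)) =
        (commutatorSpan k S).dualAnnihilator := by
    classical
  have hchar : ∀ (N : FDModule k S) (s : S),
      natChar N s = LinearMap.trace k N.V (Algebra.lsmul k k N.V s) := by
    intro N s
    simp only [natChar, twChar, twCharOf, LinearMap.comp_apply, AlgHom.toLinearMap_apply]
    rfl
  have hmemann : ∀ N : FDModule k S, natChar N ∈ (commutatorSpan k S).dualAnnihilator := by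
    intro N
    rw [Submodule.mem_dualAnnihilator]
    intro x hx
    have hle : commutatorSpan k S ≤ LinearMap.ker (natChar N) := by
      rw [commutatorSpan, Submodule.span_le]
      rintro y ⟨a, b, rfl⟩
      simp only [SetLike.mem_coe, LinearMap.mem_ker, map_sub, hchar, _root_.map_mul]
      rw [LinearMap.trace_mul_comm, sub_self]
    exact hle hx
  have hdens : ∀ Φ : ∀ i, Module.End k (W i).V, ∃ s : S, ∀ i,
      (Algebra.lsmul k k (W i).V s : Module.End k (W i).V) = Φ i := by
    intro Φ
    obtain ⟨s, hs⟩ := Statement3Aux2.density hsplit W hsimple hpair Φ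
    exact ⟨s, fun i => LinearMap.ext fun v => by rw [Algebra.lsmul_coe]; exact hs i v⟩
  have hduals : ∀ j : Fin n, ∃ s : S, ∀ i, natChar (W i) s = if i = j then 1 else 0 := by
    intro j
    haveI := hsimple j
    haveI : Nontrivial (W j).V := IsSimpleModule.nontrivial S _
    obtain ⟨e, he⟩ := Statement3Aux.exists_trace_one (k := k) (V := (W j).V)
    obtain ⟨s, hs⟩ := hdens (Pi.single j e)
    refine ⟨s, fun i => ?_⟩
    rw [hchar, hs i]
    by_cases hij : i = j
    · subst hij; simp [he]
    · simp [Pi.single_eq_of_ne hij, hij]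
  choose t ht using hduals
  constructor
  · rw [Fintype.linearIndependent_iff]
    intro gc hsum i
    have h1 := DFunLike.congr_fun hsum (t i)
    simp only [LinearMap.sum_apply, LinearMap.smul_apply, smul_eq_mul,
      LinearMap.zero_apply] at h1
    have h2 : ∀ j, natChar (W j) (t i) = if j = i then (1:k) else 0 := fun j => ht i j
    rw [Finset.sum_congr rfl fun j _ => by rw [h2 j]] at h1
    simpa using h1
  · apply le_antisymm
    · rw [Submodule.span_le]
      rintro _ ⟨i, rfl⟩
      exact hmemann (W i)
    · intro f hf
      rw [Submodule.mem_dualAnnihilator] at hf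
      set ρ : ∀ i, S →ₐ[k] Module.End k (W i).V := fun i => Algebra.lsmul k k (W i).V with hρ
      set Ψ : S →ₐ[k] (∀ i, Module.End k (W i).V) := Pi.algHom k _ ρ with hΨ
      have hsurj : Function.Surjective Ψ := by
        intro Φ; obtain ⟨s, hs⟩ := hdens Φ; exact ⟨s, funext hs⟩
      have hker : LinearMap.ker Ψ.toLinearMap ≤ LinearMap.ker f := by
        intro x hx
        rw [LinearMap.mem_ker] at hx ⊢
        apply hf
        apply hcon
        show x ∈ (⊥ : Ideal S).jacobson
        rw [Ideal.jacobson]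
        rw [Submodule.mem_sInf]
        rintro m ⟨-, hm⟩
        haveI hsm : IsSimpleModule S (S ⧸ m) :=
          isSimpleModule_iff_isCoatom.mpr (Ideal.isMaximal_def.mp hm)
        obtain ⟨i, ⟨e⟩⟩ := hcomplete (S ⧸ m) hsm
        have hΨx : Ψ x = 0 := hx
        have hxi : (ρ i) x = 0 := by
          have := congrFun hΨx i
          simpa [hΨ, Pi.algHom_apply] using this
        have hx0 : ∀ v : (W i).V, x • v = 0 := by
          intro v
          have h3 : x • v = ((ρ i) x) v := by rw [hρ]; simp [Algebra.lsmul_coe]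
          rw [h3, hxi]; rfl
        have h1 : x • (Submodule.Quotient.mk (1:S) : S ⧸ m) = 0 := by
          obtain ⟨v, hv⟩ := e.surjective (Submodule.Quotient.mk 1)
          rw [← hv, ← _root_.map_smul, hx0 v, map_zero]
        rwa [show x • (Submodule.Quotient.mk (1:S) : S ⧸ m)
            = Submodule.Quotient.mk (x • (1:S)) from (Submodule.Quotient.mk_smul m x 1).symm,
          smul_eq_mul, mul_one, Submodule.Quotient.mk_eq_zero] at h1
      let q := Ψ.toLinearMap.quotKerEquivOfSurjective hsurj
      let flift := (LinearMap.ker Ψ.toLinearMap).liftQ f hker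
      let g : (∀ i, Module.End k (W i).V) →ₗ[k] k := flift ∘ₗ q.symm.toLinearMap
      have hg : ∀ s : S, g (Ψ s) = f s := by
        intro s
        have h1 : q (Submodule.Quotient.mk s) = Ψ s := rfl
        have h2 : q.symm (Ψ s) = Submodule.Quotient.mk s := by
          rw [← h1, LinearEquiv.symm_apply_apply]
        show flift (q.symm (Ψ s)) = f s
        rw [h2]
        exact Submodule.liftQ_apply _ f s
      have hgcomm : ∀ u v : ∀ i, Module.End k (W i).V, g (u * v - v * u) = 0 := by
        intro u v
        obtain ⟨a, rfl⟩ := hsurj u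
        obtain ⟨c, rfl⟩ := hsurj v
        rw [← _root_.map_mul, ← _root_.map_mul, ← map_sub, hg]
        exact hf _ (Submodule.subset_span ⟨a, c, rfl⟩)
      have hgi : ∀ i : Fin n, ∃ ci : k, ∀ φ : Module.End k (W i).V,
          g (Pi.single i φ) = ci * LinearMap.trace k (W i).V φ := by
        intro i
        haveI := hsimple i
        haveI : Nontrivial (W i).V := IsSimpleModule.nontrivial S _
        have := Statement3Aux.eq_smul_trace
          (g ∘ₗ LinearMap.single k (fun i => Module.End k (W i).V) i) ?_
        · obtain ⟨ci, hci⟩ := this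
          exact ⟨ci, fun φ => hci φ⟩
        · intro x hx
          have hle : commutatorSpan k (Module.End k (W i).V) ≤
              LinearMap.ker (g ∘ₗ LinearMap.single k (fun i => Module.End k (W i).V) i) := by
            rw [commutatorSpan, Submodule.span_le]
            rintro _ ⟨u, v, rfl⟩
            simp only [SetLike.mem_coe, LinearMap.mem_ker, LinearMap.comp_apply]
            have hcoe : ∀ y : Module.End k (W i).V,
                (LinearMap.single k (fun i => Module.End k (W i).V) i) y = Pi.single i y :=
              fun y => rfl
            rw [hcoe, Pi.single_sub, Pi.single_mul, Pi.single_mul]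
            exact hgcomm _ _
          exact hle hx
      choose c hc using hgi
      have hf_eq : f = ∑ i, c i • natChar (W i) := by
        apply LinearMap.ext
        intro s
        have h1 : f s = g (Ψ s) := (hg s).symm
        have h2 : (Ψ s) = ∑ i, Pi.single i (Ψ s i) := (Finset.univ_sum_single (Ψ s)).symm
        rw [h1, h2, map_sum, LinearMap.sum_apply]
        refine Finset.sum_congr rfl fun i _ => ?_
        rw [hc i, LinearMap.smul_apply, hchar, smul_eq_mul]
        congr 1
      rw [hf_eq]
      exact Submodule.sum_mem _ fun i _ =>
        Submodule.smul_mem _ _ (Submodule.subset_span ⟨i, rfl⟩)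
end

section
/- Let k be a field, S a finite-dimensional split k-algebra which is constrained, and R a factor algebra of S which is a symmetric algebra. Then R is semisimple. In particular, a constrained finite-dimensional split symmetric k-algebra is semisimple. -/
open TensorProduct

namespace Paper
/-- `R` is a symmetric `k`-algebra: it carries a nondegenerate symmetric associative
bilinear form. -/
def IsSymmetricAlgebra (k R : Type*) [Field k] [Ring R] [Algebra k R] : Prop :=
  ∃ B : R →ₗ[k] R →ₗ[k] k,
    (∀ x y : R, B x y = B y x) ∧ (∀ x : R, (∀ y : R, B x y = 0) → x = 0) ∧
    (∀ x y z : R, B (x * y) z = B x (y * z))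
end Paper


/-!
If `B` is a nondegenerate symmetric associative form on `R`, then `λ = B 1` kills every
commutator, and `B x y = λ (y * x)`. So an element `x` with `R * x ⊆ [R,R]` is orthogonal to
all of `R`, hence zero. For `x ∈ J(S)` we have `S * x ⊆ J(S) ⊆ [S,S]`, which `π` carries into
`[R,R]`; thus `π` kills `J(S)` and factors through `S / J(S)`, which is semisimple as `S` is
Artinian.
-/
namespace Paper

variable {k R : Type*} [Field k] [Ring R] [Algebra k R]

theorem map_mem_commutatorSpan {S : Type*} [Ring S] [Algebra k S] (f : S →ₐ[k] R) {x : S}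
    (hx : x ∈ commutatorSpan k S) : f x ∈ commutatorSpan k R := by
  refine (Submodule.map_span_le f.toLinearMap _ _).mpr ?_ (Submodule.mem_map_of_mem hx)
  rintro _ ⟨a, b, rfl⟩
  exact Submodule.subset_span ⟨f a, f b, by simp⟩

theorem commutatorSpan_le_ker_apply_one {B : R →ₗ[k] R →ₗ[k] k}
    (hsymm : ∀ x y : R, B x y = B y x) (hassoc : ∀ x y z : R, B (x * y) z = B x (y * z)) :
    commutatorSpan k R ≤ LinearMap.ker (B 1) := by
  refine Submodule.span_le.mpr ?_
  rintro _ ⟨a, b, rfl⟩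
  simp only [SetLike.mem_coe, LinearMap.mem_ker, map_sub, ← hassoc, one_mul, hsymm a b,
    sub_self]

theorem IsSymmetricAlgebra.eq_zero_of_forall_mul_mem_commutatorSpan
    (hsym : IsSymmetricAlgebra k R) {x : R} (hx : ∀ y : R, y * x ∈ commutatorSpan k R) :
    x = 0 := by
  obtain ⟨B, hsymm, hnondeg, hassoc⟩ := hsym
  refine hnondeg x fun y => ?_
  calc B x y = B 1 (y * x) := by rw [hsymm, ← hassoc, one_mul]
    _ = 0 := commutatorSpan_le_ker_apply_one hsymm hassoc (hx y)

theorem IsConstrained.jacobson_le_ker {S : Type*} [Ring S] [Algebra k S]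
    (hcon : IsConstrained k S) (hsym : IsSymmetricAlgebra k R) (π : S →ₐ[k] R)
    (hπ : Function.Surjective π) : Ring.jacobson S ≤ RingHom.ker π := by
  intro x hx
  refine hsym.eq_zero_of_forall_mul_mem_commutatorSpan fun y => ?_
  obtain ⟨t, rfl⟩ := hπ y
  rw [← map_mul]
  refine map_mem_commutatorSpan π (hcon ?_)
  rw [SetLike.mem_coe, Ideal.jacobson_bot]
  exact Ideal.mul_mem_left _ t hx

end Paper

open Paper in
/-- The factor algebra is presented as the image of a surjective algebra map `π : S → R`. -/
theorem statement4_general (k S R : Type) [Field k] [Ring S] [Algebra k S] [FiniteDimensional k S]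
    [Ring R] [Algebra k R]
    (hcon : IsConstrained k S)
    (π : S →ₐ[k] R) (hπ : Function.Surjective π)
    (hsym : IsSymmetricAlgebra k R) :
    IsSemisimpleRing R := by
  have : IsArtinianRing S := isArtinian_of_tower k inferInstance
  have hker : ∀ x ∈ Ring.jacobson S, π x = 0 := hcon.jacobson_le_ker hsym π hπ
  exact RingHom.isSemisimpleRing_of_surjective
    (Ideal.Quotient.lift (Ring.jacobson S) π.toRingHom hker)
    (Ideal.Quotient.lift_surjective_of_surjective _ _ hπ)

open Paper in
/-- Lemma 2.3(i): a symmetric factor algebra of a constrained split algebra is semisimple.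
In particular a constrained finite-dimensional split symmetric `k`-algebra is semisimple.
The factor algebra is presented as the image of a surjective algebra map `π : S → R`. -/
theorem statement4 (k S R : Type) [Field k] [Ring S] [Algebra k S] [FiniteDimensional k S]
    [Ring R] [Algebra k R]
    (hsplit : IsSplitAlgebra k S) (hcon : IsConstrained k S)
    (π : S →ₐ[k] R) (hπ : Function.Surjective π)
    (hsym : IsSymmetricAlgebra k R) :
    IsSemisimpleRing R :=
  statement4_general k S R hcon π hπ hsym
end

section
/- Let k be a field and S a finite-dimensional split k-algebra which is a symmetric algebra and is not semisimple. Then the dimension of the centre Z(S) of S is strictly greater than l(S), the number of isomorphism classes of simple left S-modules. -/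
open TensorProduct

section Aux

variable {R : Type*} [Ring R]

lemma IsSimpleModule.isSemisimple {M : Type*} [AddCommGroup M] [Module R M]
    [IsSimpleModule R M] : IsSemisimpleModule R M :=
  IsSemisimpleModule.of_sSup_simples_eq_top <| le_antisymm le_top <|
    le_sSup (IsSimpleModule.congr (Submodule.topEquiv (R := R) (M := M)))

lemma piSemisimple {ι : Type*} [Finite ι] (M : ι → Type*) [∀ i, AddCommGroup (M i)]
    [∀ i, Module R (M i)] [h : ∀ i, IsSemisimpleModule R (M i)] :
    IsSemisimpleModule R (∀ i, M i) := by
  classical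
  refine isSemisimpleModule_of_isSemisimpleModule_submodule'
    (p := fun i => LinearMap.range (LinearMap.single R M i)) (fun i => ?_)
    (LinearMap.iSup_range_single R M)
  exact IsSemisimpleModule.range _

lemma semisimple_of_jacobson_bot {S : Type*} [Ring S] [IsArtinian S S]
    (h : Ideal.jacobson (⊥ : Ideal S) = ⊥) : IsSemisimpleRing S := by
  classical
  set T : Set (Ideal S) := {I | ∃ t : Finset (Ideal S), (∀ m ∈ t, m.IsMaximal) ∧ I = t.inf id}
    with hT
  have hTop : (⊤ : Ideal S) ∈ T := ⟨∅, by simp, by simp⟩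
  obtain ⟨I₀, hI₀, hmin⟩ := IsArtinian.set_has_minimal T ⟨⊤, hTop⟩
  obtain ⟨t, ht, rfl⟩ := hI₀
  have hI₀bot : t.inf id = ⊥ := by
    have hle : t.inf id ≤ Ideal.jacobson (⊥ : Ideal S) := by
      refine le_sInf fun m hm => ?_
      obtain ⟨-, hmax⟩ := hm
      have hmem : (t.inf id) ⊓ m ∈ T := by
        refine ⟨insert m t, fun x hx => ?_, ?_⟩
        · rcases Finset.mem_insert.1 hx with rfl | hx
          exacts [hmax, ht x hx]
        · rw [Finset.inf_insert]; simp [inf_comm]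
      have hnlt : ¬ (t.inf id ⊓ m < t.inf id) := hmin _ hmem
      have heq : t.inf id ⊓ m = t.inf id := by
        rcases lt_or_eq_of_le (inf_le_left : t.inf id ⊓ m ≤ t.inf id) with hlt | heq
        · exact absurd hlt hnlt
        · exact heq
      exact heq ▸ inf_le_right
    rw [h] at hle; exact le_bot_iff.mp hle
  -- S embeds into the product of the simple modules S ⧸ m
  let Φ : S →ₗ[S] ∀ m : t, S ⧸ (m : Ideal S) :=
    LinearMap.pi fun m => ((m : Ideal S)).mkQ
  have hker : LinearMap.ker Φ = ⊥ := by
    rw [LinearMap.ker_pi, ← hI₀bot, Finset.inf_eq_iInf]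
    simp only [Submodule.ker_mkQ, id_eq]
    exact iInf_subtype
  have hinj : Function.Injective Φ := LinearMap.ker_eq_bot.mp hker
  have hsimple : ∀ m : t, IsSimpleModule S (S ⧸ (m : Ideal S)) := fun m =>
    isSimpleModule_iff_isCoatom.mpr (Ideal.isMaximal_def.mp (ht m m.2))
  haveI : ∀ m : t, IsSemisimpleModule S (S ⧸ (m : Ideal S)) := fun m =>
    have := hsimple m; IsSimpleModule.isSemisimple
  haveI hpi : IsSemisimpleModule S (∀ m : t, S ⧸ (m : Ideal S)) := piSemisimple _
  exact IsSemisimpleModule.congr (M := LinearMap.range Φ) (LinearEquiv.ofInjective Φ hinj)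

end Aux

section Density

variable {S M : Type*} [Ring S] [AddCommGroup M] [Module S M]

/-- Jacobson density, in the weak form we need. -/
lemma density [IsSemisimpleModule S M] (f : M →+ M)
    (hf : ∀ (g : M →ₗ[S] M) (v : M), f (g v) = g (f v))
    {r : ℕ} (m : Fin r → M) : ∃ s : S, ∀ t, s • m t = f (m t) := by
  classical
  haveI : IsSemisimpleModule S (Fin r → M) := piSemisimple (fun _ : Fin r => M)
  set N : Submodule S (Fin r → M) := Submodule.span S {m} with hN
  obtain ⟨N', hc⟩ := exists_isCompl N
  set p : (Fin r → M) →ₗ[S] (Fin r → M) := N.subtype.comp (N.linearProjOfIsCompl N' hc) with hp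
  have hpN : ∀ x ∈ N, p x = x := fun x hx => by
    simp [hp, Submodule.linearProjOfIsCompl_apply_left hc ⟨x, hx⟩]
    exact congrArg Subtype.val (Submodule.projectionOnto_apply_left hc ⟨x, hx⟩)
  have hpran : ∀ x, p x ∈ N := fun x => (N.linearProjOfIsCompl N' hc x).2
  set π : Fin r → Fin r → (M →ₗ[S] M) := fun a b =>
    (LinearMap.proj a).comp (p.comp (LinearMap.single S (fun _ : Fin r => M) b)) with hπ
  have hdecomp : ∀ (x : Fin r → M) (a : Fin r), p x a = ∑ b, π a b (x b) := by
    intro x a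
    conv_lhs => rw [← Finset.univ_sum_single x]
    rw [map_sum]
    simp [hπ]
  have hmN : m ∈ N := Submodule.mem_span_singleton_self m
  have key : (fun t => f (m t)) ∈ N := by
    have : (fun t => f (m t)) = p (fun t => f (m t)) := by
      funext a
      rw [hdecomp]
      have : ∀ b, π a b (f (m b)) = f (π a b (m b)) := fun b => (hf (π a b) (m b)).symm
      simp_rw [this]
      rw [← map_sum, ← hdecomp, hpN m hmN]
    rw [this]; exact hpran _
  obtain ⟨s, hs⟩ := Submodule.mem_span_singleton.mp key
  exact ⟨s, fun t => congrFun hs t⟩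

end Density
section Aux2

open Paper

variable {k S : Type} [Field k] [Ring S] [Algebra k S]

lemma joint_surj {n : ℕ} (W : Fin n → FDModule k S)
    (hsimple : ∀ i, IsSimpleModule S (W i).V)
    (hpair : ∀ i j, i ≠ j → ¬ Nonempty ((W i).V ≃ₗ[S] (W j).V))
    (hsplit : IsSplitAlgebra k S)
    (g : ∀ i, (W i).V →ₗ[k] (W i).V) :
    ∃ s : S, ∀ i (w : (W i).V), s • w = g i w := by
  classical
  haveI : ∀ i, IsSimpleModule S (W i).V := hsimple
  haveI : ∀ i, IsSemisimpleModule S (W i).V := fun i => IsSimpleModule.isSemisimple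
  haveI : IsSemisimpleModule S (∀ i, (W i).V) := piSemisimple _
  set f : (∀ i, (W i).V) →+ (∀ i, (W i).V) :=
    AddMonoidHom.mk' (fun v i => g i (v i))
      (by intro a b; funext i; simp [Pi.add_apply]) with hf0
  have hf : ∀ (φ : (∀ i, (W i).V) →ₗ[S] (∀ i, (W i).V)) (v : ∀ i, (W i).V),
      f (φ v) = φ (f v) := by
    intro φ v
    set ψ : ∀ i j : Fin n, ((W j).V →ₗ[S] (W i).V) := fun i j =>
      (LinearMap.proj i).comp (φ.comp (LinearMap.single S (fun j => (W j).V) j)) with hψ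
    have hzero : ∀ i j, i ≠ j → ψ i j = 0 := by
      intro i j hij
      by_contra hne
      exact hpair j i (Ne.symm hij)
        ⟨LinearEquiv.ofBijective _ (LinearMap.bijective_of_ne_zero hne)⟩
    have hcollapse : ∀ (x : ∀ i, (W i).V) i, φ x i = ψ i i (x i) := by
      intro x i
      conv_lhs => rw [← Finset.univ_sum_single x]
      rw [map_sum]
      have h1 : (∑ j' : Fin n, φ (Pi.single j' (x j'))) i
          = ∑ j' : Fin n, ψ i j' (x j') := by
        rw [Finset.sum_apply]
        rfl
      rw [h1]
      rw [Finset.sum_eq_single_of_mem i (Finset.mem_univ i)]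
      intro b _ hb
      rw [hzero i b (Ne.symm hb)]
      rfl
    obtain hdiag := fun i => hsplit (W i).V (hsimple i) (ψ i i)
    funext i
    obtain ⟨c, hc⟩ := hdiag i
    show g i (φ v i) = φ (f v) i
    have hfv : f v i = g i (v i) := rfl
    rw [hcollapse v i, hcollapse (f v) i, hc, hc, hfv, algebraMap_smul, algebraMap_smul,
      map_smul]
  obtain ⟨r, v, hv⟩ := Module.Finite.exists_fin (R := k) (M := ∀ i, (W i).V)
  obtain ⟨s, hs⟩ := density f hf v
  set A : (∀ i, (W i).V) →ₗ[k] (∀ i, (W i).V) :=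
    { toFun := fun x => s • x
      map_add' := fun a b => smul_add s a b
      map_smul' := fun c x => smul_comm s c x } with hA
  set G : (∀ i, (W i).V) →ₗ[k] (∀ i, (W i).V) :=
    LinearMap.pi fun i => (g i).comp (LinearMap.proj i) with hG
  have hAG : A = G := by
    refine LinearMap.ext_on hv ?_
    rintro x ⟨t, rfl⟩
    show s • v t = G (v t)
    rw [hs t]
    rfl
  refine ⟨s, fun i w => ?_⟩
  have := congrFun (congrArg (fun (F : (∀ i, (W i).V) →ₗ[k] (∀ i, (W i).V)) =>
    F (Pi.single i w)) hAG) i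
  simpa [hA, hG] using this

lemma exists_trace_one (V : Type*) [AddCommGroup V] [Module k V] [FiniteDimensional k V]
    [Nontrivial V] : ∃ θ : V →ₗ[k] V, LinearMap.trace k V θ = 1 := by
  have hpos : 0 < Module.finrank k V := Module.finrank_pos
  set b := Module.finBasis k V with hb
  set q : Fin (Module.finrank k V) := ⟨0, hpos⟩ with hq
  refine ⟨dualTensorHom k V V (b.coord q ⊗ₜ[k] b q), ?_⟩
  rw [LinearMap.trace_eq_contract_apply, contractLeft_apply, Module.Basis.coord_apply,
    Module.Basis.repr_self, Finsupp.single_eq_same]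

lemma jac_smul_eq_zero {L : Type*} [AddCommGroup L] [Module S L] (h : IsSimpleModule S L)
    {x : S} (hx : x ∈ Ideal.jacobson (⊥ : Ideal S)) (v : L) : x • v = 0 := by
  rcases eq_or_ne v 0 with rfl | hv
  · exact smul_zero x
  haveI := h
  have hsurj : Function.Surjective (LinearMap.toSpanSingleton S L v) := by
    exact IsSimpleModule.toSpanSingleton_surjective S hv
  have hco : IsCoatom (LinearMap.ker (LinearMap.toSpanSingleton S L v)) :=
    LinearMap.isCoatom_ker_of_surjective hsurj
  have hmax : Ideal.IsMaximal (LinearMap.ker (LinearMap.toSpanSingleton S L v)) :=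
    Ideal.isMaximal_def.mpr hco
  have hxk : x ∈ LinearMap.ker (LinearMap.toSpanSingleton S L v) :=
    Ideal.mem_sInf.mp hx ⟨bot_le, hmax⟩
  simpa [LinearMap.toSpanSingleton_apply] using hxk

lemma natChar_apply (N : FDModule k S) (s : S) :
    natChar N s = LinearMap.trace k N.V (Algebra.lsmul k k N.V s) := by
  have h1 : ((LinearMap.llcomp k N.V N.V N.V) LinearMap.id) ((Algebra.lsmul k k N.V) s)
      = (Algebra.lsmul k k N.V) s := by ext x; rfl
  simp [natChar, twChar, twCharOf, h1]

end Aux2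

open Paper in
/-- Lemma 2.3(ii): if `S` is a finite-dimensional split symmetric `k`-algebra that is not
semisimple, then `dim Z(S) > l(S)`, where `l(S) = n` is the number of isomorphism classes of
simple left `S`-modules, presented via a complete set `V_1, …, V_n` of pairwise
non-isomorphic simple modules. -/
theorem statement5 (k S : Type) [Field k] [Ring S] [Algebra k S] [FiniteDimensional k S]
    (hsplit : IsSplitAlgebra k S) (hsym : IsSymmetricAlgebra k S)
    (hss : ¬ IsSemisimpleRing S)
    (n : ℕ) (W : Fin n → FDModule k S)
    (hsimple : ∀ i, IsSimpleModule S (W i).V)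
    (hpair : ∀ i j, i ≠ j → ¬ Nonempty ((W i).V ≃ₗ[S] (W j).V))
    (hcomplete : ∀ (L : Type) [AddCommGroup L] [Module S L], IsSimpleModule S L →
      ∃ i, Nonempty ((W i).V ≃ₗ[S] L)) :
    n < Module.finrank k (Subalgebra.center k S) := by
  classical
  obtain ⟨B, hBsymm, hBnd, hBassoc⟩ := hsym
  haveI : IsArtinian S S := isArtinian_of_tower k inferInstance
  have hJ : Ideal.jacobson (⊥ : Ideal S) ≠ ⊥ := fun h => hss (semisimple_of_jacobson_bot h)
  obtain ⟨j0, hj0J, hj0⟩ := (Submodule.ne_bot_iff _).mp hJ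
  set lam : Module.Dual k S := B 1 with hlam
  have hBsd : ∀ x y : S, B x y = lam (x * y) := by
    intro x y
    calc B x y = B x (y * 1) := by rw [mul_one]
    _ = B (x * y) 1 := (hBassoc x y 1).symm
    _ = B 1 (x * y) := hBsymm _ _
  obtain ⟨y, hyB⟩ : ∃ y, B j0 y ≠ 0 := by
    by_contra hy; push_neg at hy; exact hj0 (hBnd j0 hy)
  set j : S := y * j0 with hj
  have hjJ : j ∈ Ideal.jacobson (⊥ : Ideal S) := Submodule.smul_mem _ y hj0J
  have hlamj : lam j ≠ 0 := by
    have h1 : B y j0 = lam (y * j0) := hBsd y j0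
    rw [← hj] at h1
    rw [← h1, hBsymm]
    exact hyB
  have hmem_ann : ∀ φ : Module.Dual k S, (∀ a b : S, φ (a * b) = φ (b * a)) →
      φ ∈ (commutatorSpan k S).dualAnnihilator := by
    intro φ hφ
    rw [Submodule.mem_dualAnnihilator _]
    intro w hw
    have hle : commutatorSpan k S ≤ LinearMap.ker φ := by
      rw [commutatorSpan, Submodule.span_le]
      rintro x ⟨a, b, rfl⟩
      simp [LinearMap.mem_ker, map_sub, hφ a b]
    exact hle hw
  have hlam_ann : lam ∈ (commutatorSpan k S).dualAnnihilator := by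
    apply hmem_ann
    intro a b
    rw [← hBsd a b, ← hBsd b a, hBsymm]
  haveI : ∀ i, Nontrivial (W i).V := fun i => (hsimple i).nontrivial
  have hθ : ∀ i, ∃ θ : (W i).V →ₗ[k] (W i).V, LinearMap.trace k (W i).V θ = 1 := fun i =>
    exists_trace_one _
  choose θ hθ1 using hθ
  have hgs : ∀ i, ∃ s : S, ∀ l (w : (W l).V),
      s • w = (Pi.single i (θ i) : ∀ l, (W l).V →ₗ[k] (W l).V) l w :=
    fun i => joint_surj W hsimple hpair hsplit (Pi.single i (θ i))
  choose sel hsel using hgs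
  have hchi : ∀ i l, natChar (W l) (sel i) = (if l = i then (1:k) else 0) := by
    intro i l
    rw [natChar_apply]
    have h1 : (Algebra.lsmul k k (W l).V (sel i))
        = (Pi.single i (θ i) : ∀ l, (W l).V →ₗ[k] (W l).V) l := by
      ext w; exact hsel i l w
    rw [h1]
    rcases eq_or_ne l i with rfl | hne
    · simp [Pi.single_eq_same, hθ1 l]
    · simp [Pi.single_eq_of_ne hne, hne]
  have hchiJ : ∀ l, ∀ x ∈ Ideal.jacobson (⊥ : Ideal S), natChar (W l) x = 0 := by
    intro l x hx
    rw [natChar_apply]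
    have h1 : (Algebra.lsmul k k (W l).V x) = 0 := by
      ext w; exact jac_smul_eq_zero (hsimple l) hx w
    rw [h1, map_zero]
  have hchi_ann : ∀ l, natChar (W l) ∈ (commutatorSpan k S).dualAnnihilator := by
    intro l
    apply hmem_ann
    intro a b
    rw [natChar_apply, natChar_apply, map_mul (Algebra.lsmul k k (W l).V) a b,
      map_mul (Algebra.lsmul k k (W l).V) b a]
    exact LinearMap.trace_mul_comm k _ _
  set A := (commutatorSpan k S).dualAnnihilator with hA
  set u : Fin (n+1) → Module.Dual k S := Fin.cons lam (fun i => natChar (W i)) with hu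
  have huind : LinearIndependent k u := by
    refine Fintype.linearIndependent_iff.mpr (fun g hg => ?_)
    have heval : ∀ x : S, ∑ i, g i * ((u i) x) = 0 := by
      intro x
      have := LinearMap.congr_fun hg x
      simpa [LinearMap.sum_apply, LinearMap.smul_apply, smul_eq_mul] using this
    have h0 : g 0 = 0 := by
      have hevj := heval j
      rw [Fin.sum_univ_succ] at hevj
      simp only [Fin.cons_zero, Fin.cons_succ, hu] at hevj
      have hz : ∀ l : Fin n, g l.succ * (natChar (W l) j) = 0 := by
        intro l; rw [hchiJ l j hjJ, mul_zero]
      rw [Finset.sum_congr rfl (fun l _ => hz l), Finset.sum_const, smul_zero, add_zero] at hevj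
      exact (mul_eq_zero.mp hevj).resolve_right hlamj
    intro i
    refine Fin.cases h0 (fun l => ?_) i
    have hevs := heval (sel l)
    rw [Fin.sum_univ_succ] at hevs
    simp only [Fin.cons_zero, Fin.cons_succ, hu] at hevs
    rw [h0, zero_mul, zero_add] at hevs
    have hterm : ∀ l' : Fin n, g l'.succ * (natChar (W l') (sel l))
        = if l' = l then g l.succ else 0 := by
      intro l'
      rw [hchi l l']
      rcases eq_or_ne l' l with rfl | hne
      · simp
      · simp [hne]
    rw [Finset.sum_congr rfl (fun l' _ => hterm l'), Finset.sum_ite_eq' Finset.univ l] at hevs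
    simpa using hevs
  have hspan : Submodule.span k (Set.range u) ≤ A := by
    rw [Submodule.span_le]
    rintro _ ⟨i, rfl⟩
    refine Fin.cases ?_ ?_ i
    · simpa [hu] using hlam_ann
    · intro l
      simpa [hu] using hchi_ann l
  haveI hfin : Module.Finite k A := FiniteDimensional.finiteDimensional_submodule A
  have hcard : n + 1 ≤ Module.finrank k A := by
    have h1 : Module.finrank k (Submodule.span k (Set.range u)) = n + 1 := by
      rw [finrank_span_eq_card huind, Fintype.card_fin]
    exact h1 ▸ Submodule.finrank_mono hspan
  have hBinj : Function.Injective B := by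
    intro a b hab
    have hz : ∀ z, B (a - b) z = 0 := by
      intro z
      rw [map_sub]
      simp [LinearMap.sub_apply, hab]
    exact sub_eq_zero.mp (hBnd _ hz)
  have hBsurj : Function.Surjective B := by
    rw [← LinearMap.range_eq_top]
    apply Submodule.eq_top_of_finrank_eq
    rw [LinearMap.finrank_range_of_inj hBinj, Subspace.dual_finrank_eq]
  have hZmap : (Subalgebra.toSubmodule (Subalgebra.center k S)).map B = A := by
    apply le_antisymm
    · rintro _ ⟨z, hz, rfl⟩
      apply hmem_ann
      intro a b
      have hz' : ∀ x, x * z = z * x :=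
        Subalgebra.mem_center_iff.mp ((Subalgebra.mem_toSubmodule _).mp hz)
      calc B z (a * b) = B (z * a) b := (hBassoc z a b).symm
        _ = B (a * z) b := by rw [hz' a]
        _ = B a (z * b) := hBassoc a z b
        _ = B (z * b) a := hBsymm _ _
        _ = B z (b * a) := hBassoc z b a
    · intro φ hφ
      obtain ⟨z, rfl⟩ := hBsurj φ
      refine ⟨z, (Subalgebra.mem_toSubmodule _).mpr (Subalgebra.mem_center_iff.mpr ?_), rfl⟩
      intro x
      have hcomm : ∀ w, B (z * x - x * z) w = 0 := by
        intro w
        have h1 : B (z * x) w = B z (x * w) := hBassoc z x w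
        have h2 : B (x * z) w = B z (w * x) := by
          calc B (x * z) w = B x (z * w) := hBassoc x z w
            _ = B (z * w) x := hBsymm _ _
            _ = B z (w * x) := hBassoc z w x
        have h3 : B z (x * w - w * x) = 0 :=
          (Submodule.mem_dualAnnihilator _).mp hφ _ (Submodule.subset_span ⟨x, w, rfl⟩)
        have h4 : B (z * x - x * z) w = B z (x * w) - B z (w * x) := by
          rw [map_sub]
          simp [LinearMap.sub_apply, h1, h2]
        rw [h4, ← map_sub, h3]
      have h5 := hBnd _ hcomm
      have h6 : z * x = x * z := by
        have := sub_eq_zero.mp h5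
        exact this
      rw [h6]
  have hfr : Module.finrank k (Subalgebra.center k S) = Module.finrank k A := by
    rw [← hZmap]
    exact LinearEquiv.finrank_eq
      (Submodule.equivMapOfInjective B hBinj (Subalgebra.toSubmodule (Subalgebra.center k S)))
  rw [hfr]
  omega
end

section
/- Let k be a field and S a finite-dimensional split k-algebra. Then S is constrained (i.e. J(S) ⊆ [S,S]) if and only if the pair (S,S) is constrained, i.e. C₀(S,S) = C(S,S). Moreover, if k is algebraically closed then C₀(S,S) = C₀(S). -/
open TensorProduct

namespace Paper
/-- `C₀(S,S)`: the span of all twisted trace functions `χ_θ` for `θ ∈ End_S(V)`, `V` ranging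
over finite-dimensional `S`-modules. -/
noncomputable def pairC0 (k S : Type*) [Field k] [Ring S] [Algebra k S] :
    Submodule k (Module.Dual k S) :=
  Submodule.span k {f | ∃ (N : FDModule k S) (θ : N.V →ₗ[k] N.V),
    (∀ (s : S) (v : N.V), θ (s • v) = s • θ v) ∧ f = twChar N θ}
end Paper

namespace PaperAux

variable {k S : Type} [Field k] [Ring S] [Algebra k S]

/-- An element of the Jacobson radical of a finite-dimensional algebra is nilpotent. -/
theorem nilpotent_of_mem_jacobson [FiniteDimensional k S]
    {s : S} (hs : s ∈ (⊥ : Ideal S).jacobson) : IsNilpotent s := by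
  have hart : IsArtinian S S := isArtinian_of_tower k inferInstance
  -- descending chain of left ideals spanned by powers of s
  obtain ⟨n, hn⟩ : ∃ n : ℕ, Ideal.span {s ^ (n+1)} = Ideal.span {s ^ n} := by
    by_contra h
    push_neg at h
    have hmono : ∀ n : ℕ, Ideal.span {s ^ (n+1)} ≤ Ideal.span {s ^ n} := by
      intro n
      rw [Ideal.span_le]
      intro x hx
      rw [Set.mem_singleton_iff] at hx
      subst hx
      have : s ^ (n+1) = s • s ^ n := by rw [smul_eq_mul, pow_succ']
      rw [this]
      exact Submodule.smul_mem _ _ (Submodule.mem_span_singleton_self _)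
    have : ∀ n : ℕ, Ideal.span {s ^ (n+1)} < Ideal.span {s ^ n} :=
      fun n => lt_of_le_of_ne (hmono n) (h n)
    have hwf : WellFounded ((· < ·) : Ideal S → Ideal S → Prop) := wellFounded_lt
    obtain ⟨m, -, hm⟩ := ((RelEmbedding.natGT (fun n => Ideal.span {s ^ n}) this).wellFounded hwf).has_min Set.univ ⟨0, trivial⟩
    exact hm (m + 1) trivial (Nat.lt_succ_self m)
  -- s ^ n = t * s ^ (n+1)
  have : s ^ n ∈ Ideal.span ({s ^ (n+1)} : Set S) := hn ▸ Submodule.mem_span_singleton_self _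
  obtain ⟨t, ht⟩ := Submodule.mem_span_singleton.mp this
  rw [smul_eq_mul] at ht
  -- (1 - t*s) * s^n = 0 with 1 - t*s left invertible
  have key : (1 - t * s) * s ^ n = 0 := by
    have : t * s ^ (n+1) = (t * s) * s ^ n := by rw [pow_succ', ← mul_assoc]
    rw [sub_mul, one_mul, ← this, ht, sub_self]
  have hunit : Ideal.span ({1 - t * s} : Set S) = ⊤ := by
    by_contra hne
    obtain ⟨M, hM, hle⟩ := Ideal.exists_le_maximal _ hne
    have hsM : s ∈ M := by
      have hle' : (⊥ : Ideal S).jacobson ≤ M := sInf_le ⟨bot_le, hM⟩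
      exact hle' hs
    have h1 : (1 : S) - t * s ∈ M := hle (Submodule.mem_span_singleton_self _)
    have h2 : t * s ∈ M := M.smul_mem t hsM
    have : (1 : S) ∈ M := by
      have := M.add_mem h1 h2
      simpa using this
    exact hM.ne_top (Ideal.eq_top_of_isUnit_mem _ this isUnit_one)
  obtain ⟨u, hu⟩ := Submodule.mem_span_singleton.mp
    (hunit ▸ Submodule.mem_top : (1:S) ∈ Ideal.span ({1 - t * s} : Set S))
  rw [smul_eq_mul] at hu
  refine ⟨n, ?_⟩
  calc s ^ n = (u * (1 - t * s)) * s ^ n := by rw [hu, one_mul]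
  _ = u * ((1 - t * s) * s ^ n) := by rw [mul_assoc]
  _ = 0 := by rw [key, mul_zero]

end PaperAux


namespace PaperAux2

open Paper

variable (k S : Type) [Field k] [Ring S] [Algebra k S]

/-- The subspace `[S,S] + J(S)` of `S`. -/
noncomputable def Tsub : Submodule k S :=
  commutatorSpan k S ⊔ (Submodule.restrictScalars k ((⊥ : Ideal S).jacobson))

variable (M : Type) [AddCommGroup M] [Module k M] [Module S M] [IsScalarTower k S M]
  [SMulCommClass S k M] [FiniteDimensional k M]

/-- The representation of `S` on `M`, as an algebra morphism to `End_k M`. -/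
noncomputable def rho : S →ₐ[k] Module.End k M := Algebra.lsmul k k M

omit [FiniteDimensional k M] in
lemma rho_apply (s : S) (v : M) : rho k S M s v = s • v := rfl

omit [FiniteDimensional k M] in
lemma twCharOf_apply (θ : M →ₗ[k] M) (s : S) :
    twCharOf k S M θ s = LinearMap.trace k M (θ * rho k S M s) := rfl

variable {k S M}

omit [FiniteDimensional k M] in
lemma comm_of_Slinear {θ : M →ₗ[k] M} (hθ : ∀ (s : S) (v : M), θ (s • v) = s • θ v) (s : S) :
    Commute θ (rho k S M s) := by
  ext v
  simp only [Module.End.mul_apply]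
  exact hθ s v

lemma twCharOf_commutator {θ : M →ₗ[k] M} (hθ : ∀ (s : S) (v : M), θ (s • v) = s • θ v)
    (a b : S) : twCharOf k S M θ (a * b - b * a) = 0 := by
  have hmul : ∀ x y : S, twCharOf k S M θ (x * y)
      = LinearMap.trace k M (θ * rho k S M x * rho k S M y) := by
    intro x y
    rw [twCharOf_apply, map_mul (rho k S M) x y, mul_assoc]
  rw [map_sub, hmul, hmul,
    LinearMap.trace_mul_comm k (θ * rho k S M a) (rho k S M b), ← mul_assoc,
    ← (comm_of_Slinear hθ b).eq, sub_self]

lemma twCharOf_jacobson [FiniteDimensional k S] {θ : M →ₗ[k] M}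
    (hθ : ∀ (s : S) (v : M), θ (s • v) = s • θ v)
    {s : S} (hs : s ∈ (⊥ : Ideal S).jacobson) : twCharOf k S M θ s = 0 := by
  obtain ⟨n, hn⟩ := PaperAux.nilpotent_of_mem_jacobson (k := k) hs
  have hn1 : s ^ (n + 1) = 0 := by rw [pow_succ, hn, zero_mul]
  have hnil : IsNilpotent (θ * rho k S M s) := by
    refine ⟨n + 1, ?_⟩
    rw [(comm_of_Slinear hθ s).mul_pow, ← map_pow, hn1, map_zero, mul_zero]
  rw [twCharOf_apply]
  exact (LinearMap.isNilpotent_trace_of_isNilpotent hnil).eq_zero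

variable (k S) in
lemma pairC0_le_dualAnnihilator [FiniteDimensional k S] :
    pairC0 k S ≤ (Tsub k S).dualAnnihilator := by
  rw [pairC0]
  rw [Submodule.span_le]
  rintro f ⟨N, θ, hθ, rfl⟩
  rw [SetLike.mem_coe, Submodule.mem_dualAnnihilator]
  intro w hw
  rw [Tsub, Submodule.mem_sup] at hw
  obtain ⟨y, hy, z, hz, rfl⟩ := hw
  have hy0 : twChar N θ y = 0 := by
    have hker : commutatorSpan k S ≤ LinearMap.ker (twChar N θ) := by
      rw [commutatorSpan, Submodule.span_le]
      rintro x ⟨a, b, rfl⟩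
      rw [SetLike.mem_coe, LinearMap.mem_ker]
      exact twCharOf_commutator hθ a b
    exact LinearMap.mem_ker.mp (hker hy)
  have hz0 : twChar N θ z = 0 := twCharOf_jacobson hθ hz
  rw [map_add, hy0, hz0, add_zero]

variable (k S) in
lemma charSpan_le_pairC0 : charSpan k S ≤ pairC0 k S := by
  rw [charSpan, Submodule.span_le]
  rintro f ⟨N, rfl⟩
  exact Submodule.subset_span ⟨N, LinearMap.id, fun s v => rfl, rfl⟩

end PaperAux2



namespace PaperAux3

set_option linter.unusedSectionVars false

open Paper

variable {k S : Type} [Field k] [Ring S] [Algebra k S]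
variable {L : Type} [AddCommGroup L] [Module k L] [Module S L] [IsScalarTower k S L]
  [SMulCommClass S k L]

theorem density_aux [IsSimpleModule S L] (hsplit : IsSplitAlgebra k S) :
    ∀ (n : ℕ) (v w : Fin n → L), LinearIndependent k v → ∃ s : S, ∀ i, s • v i = w i := by
  intro n
  induction n with
  | zero => exact fun v w _ => ⟨0, fun i => i.elim0⟩
  | succ n IH =>
    intro v w hv
    have hv' : LinearIndependent k (fun i : Fin n => v i.castSucc) :=
      hv.comp Fin.castSucc (Fin.castSucc_injective n)
    set Φ : S →ₗ[S] (Fin n → L) :=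
      LinearMap.pi (fun i => LinearMap.toSpanSingleton S L (v i.castSucc)) with hΦdef
    have hΦapp : ∀ (s : S) (i : Fin n), Φ s i = s • v i.castSucc := fun s i => rfl
    have hΦ : Function.Surjective Φ := by
      intro u
      obtain ⟨s, hs⟩ := IH (fun i => v i.castSucc) u hv'
      exact ⟨s, funext fun i => hs i⟩
    set T : S →ₗ[S] L := LinearMap.toSpanSingleton S L (v (Fin.last n)) with hTdef
    rcases eq_bot_or_eq_top (Submodule.map T (LinearMap.ker Φ)) with hbot | htop
    · exfalso
      have hle : LinearMap.ker Φ ≤ LinearMap.ker T := by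
        intro x hx
        rw [LinearMap.mem_ker]
        have hmem : T x ∈ Submodule.map T (LinearMap.ker Φ) := ⟨x, hx, rfl⟩
        rw [hbot] at hmem
        exact hmem
      set e := Φ.quotKerEquivOfSurjective hΦ with hedef
      set ψm : (Fin n → L) →ₗ[S] L :=
        (LinearMap.ker Φ).liftQ T hle ∘ₗ (e.symm : (Fin n → L) ≃ₗ[S] _).toLinearMap with hψdef
      have key : ∀ s : S, ψm (Φ s) = s • v (Fin.last n) := by
        intro s
        have h1 : e.symm (Φ s) = Submodule.Quotient.mk s := by
          apply e.injective
          rw [e.apply_symm_apply]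
          rfl
        have h2 : ψm (Φ s) = (LinearMap.ker Φ).liftQ T hle (e.symm (Φ s)) := rfl
        rw [h2, h1, Submodule.liftQ_apply]
        rfl
      choose c hc using fun i : Fin n =>
        hsplit L inferInstance (ψm ∘ₗ LinearMap.single S (fun _ : Fin n => L) i)
      have hlast : v (Fin.last n) = ∑ i : Fin n, c i • v i.castSucc := by
        have h1 : v (Fin.last n) = ψm (Φ 1) := by rw [key, one_smul]
        have h2 : Φ 1 = ∑ i : Fin n, Pi.single i (v i.castSucc) := by
          rw [Finset.univ_sum_single (fun i : Fin n => v i.castSucc)]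
          funext i
          rw [hΦapp, one_smul]
        rw [h1, h2, map_sum]
        congr 1
        funext i
        have := hc i (v i.castSucc)
        rw [LinearMap.comp_apply] at this
        rw [show (LinearMap.single S (fun _ : Fin n => L) i) (v i.castSucc)
            = Pi.single i (v i.castSucc) from rfl] at this
        rw [this, algebraMap_smul]
      have hnot : v (Fin.last n) ∉
          Submodule.span k (v '' {j : Fin (n+1) | j ≠ Fin.last n}) :=
        hv.notMem_span_image (by simp)
      apply hnot
      rw [hlast]
      apply Submodule.sum_mem
      intro i _
      apply Submodule.smul_mem
      apply Submodule.subset_span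
      exact ⟨i.castSucc, fun h => (Fin.castSucc_lt_last i).ne h, rfl⟩
    · obtain ⟨s₀, hs₀⟩ := IH (fun i => v i.castSucc) (fun i => w i.castSucc) hv'
      have hmem : w (Fin.last n) - s₀ • v (Fin.last n) ∈ Submodule.map T (LinearMap.ker Φ) := by
        rw [htop]; trivial
      obtain ⟨s₁, hs₁ker, hs₁⟩ := hmem
      refine ⟨s₀ + s₁, fun i => ?_⟩
      refine Fin.lastCases ?_ (fun j => ?_) i
      · have hT : s₁ • v (Fin.last n) = w (Fin.last n) - s₀ • v (Fin.last n) := hs₁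
        rw [add_smul, hT]
        abel
      · have hker : s₁ • v j.castSucc = 0 := by
          have := congrFun (LinearMap.mem_ker.mp hs₁ker) j
          rwa [hΦapp] at this
        rw [add_smul, hker, add_zero, hs₀ j]

theorem density [IsSimpleModule S L] [FiniteDimensional k L] (hsplit : IsSplitAlgebra k S)
    (φ : L →ₗ[k] L) : ∃ s : S, ∀ x : L, s • x = φ x := by
  set b := Module.finBasis k L
  obtain ⟨s, hs⟩ := density_aux hsplit _ b (fun i => φ (b i)) b.linearIndependent
  refine ⟨s, fun x => ?_⟩
  have : PaperAux2.rho k S L s = φ := by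
    apply b.ext
    intro i
    rw [PaperAux2.rho_apply]
    exact hs i
  rw [← this]
  rfl

end PaperAux3



namespace PaperAux4

set_option linter.unusedSectionVars false
open Paper

variable {k S : Type} [Field k] [Ring S] [Algebra k S]

/-- A dual functional taking value 1 on a nonzero vector. -/
lemma exists_dual_one {V : Type} [AddCommGroup V] [Module k V] {x : V} (hx : x ≠ 0) :
    ∃ f : V →ₗ[k] k, f x = 1 := by
  have h := (Module.forall_dual_apply_eq_zero_iff k x).not.mpr hx
  push_neg at h
  obtain ⟨g, hg⟩ := h
  exact ⟨(g x)⁻¹ • g, by simp [inv_mul_cancel₀ hg]⟩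

/-- Factorization of an arbitrary endomorphism through a nonzero one. -/
lemma endo_factor {V : Type} [AddCommGroup V] [Module k V] [FiniteDimensional k V]
    {ψ : V →ₗ[k] V} (hψ : ψ ≠ 0) (φ : V →ₗ[k] V) :
    ∃ (d : ℕ) (A B : Fin d → (V →ₗ[k] V)), φ = ∑ i, (A i) ∘ₗ ψ ∘ₗ (B i) := by
  have hv : ∃ v : V, ψ v ≠ 0 := by
    by_contra h
    push_neg at h
    exact hψ (LinearMap.ext fun v => by rw [h v, LinearMap.zero_apply])
  obtain ⟨v, hv⟩ := hv
  obtain ⟨f, hf⟩ := exists_dual_one (k := k) hv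
  set b := Module.finBasis k V
  refine ⟨Module.finrank k V,
    fun i => (LinearMap.toSpanSingleton k V (φ (b i))) ∘ₗ f,
    fun i => (LinearMap.toSpanSingleton k V v) ∘ₗ (b.coord i), ?_⟩
  apply b.ext
  intro j
  rw [LinearMap.sum_apply]
  have hterm : ∀ i, ((LinearMap.toSpanSingleton k V (φ (b i))) ∘ₗ f ∘ₗ ψ ∘ₗ
      ((LinearMap.toSpanSingleton k V v) ∘ₗ (b.coord i))) (b j)
      = (b.repr (b j)) i • φ (b i) := by
    intro i
    simp only [LinearMap.comp_apply, LinearMap.toSpanSingleton_apply, Module.Basis.coord_apply,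
      map_smul, hf, smul_eq_mul, mul_one]
  calc φ (b j) = φ (∑ i, (b.repr (b j)) i • b i) := by rw [Module.Basis.sum_repr]
  _ = ∑ i, (b.repr (b j)) i • φ (b i) := by rw [map_sum]; simp [map_smul]
  _ = ∑ i, ((LinearMap.toSpanSingleton k V (φ (b i))) ∘ₗ f ∘ₗ ψ ∘ₗ
      ((LinearMap.toSpanSingleton k V v) ∘ₗ (b.coord i))) (b j) := by
    refine Finset.sum_congr rfl fun i _ => (hterm i).symm
  _ = ∑ i, ((LinearMap.toSpanSingleton k V (φ (b i))) ∘ₗ f) (ψ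
      (((LinearMap.toSpanSingleton k V v) ∘ₗ (b.coord i)) (b j))) := rfl

/-- Trace-zero matrices lie in the span of commutators. -/
lemma traceZero_matrix_mem {d : ℕ} (A : Matrix (Fin d) (Fin d) k) (hA : A.trace = 0) :
    A ∈ Submodule.span k {x : Matrix (Fin d) (Fin d) k | ∃ a b, x = a * b - b * a} := by
  classical
  by_cases hd : d = 0
  · subst hd
    have : A = 0 := Subsingleton.elim _ _
    rw [this]; exact Submodule.zero_mem _
  obtain ⟨e, rfl⟩ := Nat.exists_eq_succ_of_ne_zero hd
  set U := Submodule.span k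
    {x : Matrix (Fin (e+1)) (Fin (e+1)) k | ∃ a b, x = a * b - b * a} with hU
  have key : ∀ i j : Fin (e+1),
      (Matrix.single i j 1 : Matrix (Fin (e+1)) (Fin (e+1)) k)
        - (if i = j then Matrix.single 0 0 1 else 0) ∈ U := by
    intro i j
    by_cases hij : i = j
    · subst hij
      rw [if_pos rfl]
      by_cases hi0 : i = 0
      · subst hi0; rw [sub_self]; exact Submodule.zero_mem _
      · apply Submodule.subset_span
        refine ⟨Matrix.single i 0 1, Matrix.single 0 i 1, ?_⟩
        rw [Matrix.single_mul_single_same, Matrix.single_mul_single_same, one_mul]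
    · rw [if_neg hij, sub_zero]
      apply Submodule.subset_span
      refine ⟨Matrix.single i i 1, Matrix.single i j 1, ?_⟩
      rw [Matrix.single_mul_single_same, one_mul,
        Matrix.single_mul_single_of_ne (h := Ne.symm hij), sub_zero]
  have hsum : ∑ i : Fin (e+1), ∑ j : Fin (e+1),
      A i j • ((Matrix.single i j 1 : Matrix (Fin (e+1)) (Fin (e+1)) k)
        - (if i = j then Matrix.single 0 0 1 else 0)) = A := by
    simp_rw [smul_sub, Finset.sum_sub_distrib]
    have h1 : ∑ i : Fin (e+1), ∑ j : Fin (e+1),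
        A i j • (Matrix.single i j 1 : Matrix (Fin (e+1)) (Fin (e+1)) k) = A := by
      conv_rhs => rw [Matrix.matrix_eq_sum_single A]
      refine Finset.sum_congr rfl fun i _ => Finset.sum_congr rfl fun j _ => ?_
      rw [Matrix.smul_single, smul_eq_mul, mul_one]
    have h2 : ∑ i : Fin (e+1), ∑ j : Fin (e+1), A i j •
        (if i = j then (Matrix.single 0 0 1 : Matrix (Fin (e+1)) (Fin (e+1)) k)
          else 0) = 0 := by
      have hin : ∀ i : Fin (e+1), ∑ j : Fin (e+1), A i j •
          (if i = j then (Matrix.single 0 0 1 : Matrix (Fin (e+1)) (Fin (e+1)) k)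
            else 0)
          = A i i • (Matrix.single 0 0 1 : Matrix (Fin (e+1)) (Fin (e+1)) k) := by
        intro i
        rw [Finset.sum_eq_single i]
        · rw [if_pos rfl]
        · intro j _ hji
          rw [if_neg (Ne.symm hji), smul_zero]
        · intro h; exact absurd (Finset.mem_univ i) h
      simp_rw [hin]
      rw [← Finset.sum_smul]
      have : ∑ i : Fin (e+1), A i i = 0 := hA
      rw [this, zero_smul]
    rw [h1, h2, sub_zero]
  rw [← hsum]
  apply Submodule.sum_mem
  intro i _
  apply Submodule.sum_mem
  intro j _
  exact Submodule.smul_mem _ _ (key i j)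

end PaperAux4



namespace PaperAux5

set_option linter.unusedSectionVars false
open Paper

variable {k S : Type} [Field k] [Ring S] [Algebra k S]

lemma trace_endo_mem {V : Type} [AddCommGroup V] [Module k V] [FiniteDimensional k V]
    (φ : V →ₗ[k] V) (hφ : LinearMap.trace k V φ = 0) :
    φ ∈ Submodule.span k {x : V →ₗ[k] V | ∃ a b, x = a * b - b * a} := by
  set b := Module.finBasis k V
  set g := (Matrix.toLinAlgEquiv b : Matrix (Fin (Module.finrank k V)) _ k ≃ₐ[k] _)
  set A := LinearMap.toMatrix b b φ with hAdef
  have hA : A.trace = 0 := by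
    rw [← LinearMap.trace_eq_matrix_trace k b φ]
    exact hφ
  have hmem := PaperAux4.traceZero_matrix_mem A hA
  have hφA : g A = φ := by
    have : g A = Matrix.toLin b b A := rfl
    rw [this, hAdef, Matrix.toLin_toMatrix]
  have hmap : φ ∈ Submodule.map g.toLinearMap
      (Submodule.span k {x | ∃ a c, x = a * c - c * a}) := ⟨A, hmem, hφA⟩
  rw [Submodule.map_span] at hmap
  refine Submodule.span_mono ?_ hmap
  rintro x ⟨y, ⟨a, c, rfl⟩, rfl⟩
  exact ⟨g a, g c, show g (a * c - c * a) = g a * g c - g c * g a by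
    rw [map_sub, map_mul, map_mul]⟩

variable [FiniteDimensional k S]

lemma quotFD (m : Ideal S) : FiniteDimensional k (S ⧸ m) :=
  Module.Finite.of_surjective ((m.mkQ).restrictScalars k) (Submodule.mkQ_surjective m)

lemma quotSimple {m : Ideal S} (hm : m.IsMaximal) : IsSimpleModule S (S ⧸ m) :=
  isSimpleModule_iff_isCoatom.mpr (Ideal.isMaximal_def.mp hm)

lemma mem_annQ {m : Ideal S} {s : S} :
    s ∈ Module.annihilator S (S ⧸ m) ↔ ∀ t : S, s * t ∈ m := by
  rw [Module.mem_annihilator]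
  constructor
  · intro h t
    have := h (Submodule.Quotient.mk t)
    rwa [← Submodule.Quotient.mk_smul, smul_eq_mul, Submodule.Quotient.mk_eq_zero] at this
  · intro h v
    obtain ⟨t, rfl⟩ := Submodule.mkQ_surjective m v
    show s • Submodule.Quotient.mk t = 0
    rw [← Submodule.Quotient.mk_smul, smul_eq_mul, Submodule.Quotient.mk_eq_zero]
    exact h t

lemma annQ_le (m : Ideal S) : Module.annihilator S (S ⧸ m) ≤ m := by
  intro s hs
  have := mem_annQ.mp hs 1
  rwa [mul_one] at this

lemma mul_mem_ann {M' : Type} [AddCommGroup M'] [Module S M'] {s : S}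
    (hs : s ∈ Module.annihilator S M') (t : S) : s * t ∈ Module.annihilator S M' := by
  rw [Module.mem_annihilator] at hs ⊢
  intro v
  rw [mul_smul, hs]

lemma one_not_mem_annQ {m : Ideal S} (hm : m ≠ ⊤) :
    (1 : S) ∉ Module.annihilator S (S ⧸ m) := by
  intro h
  exact hm (Ideal.eq_top_of_isUnit_mem m (annQ_le m h) isUnit_one)

lemma jacobson_le_annQ {m : Ideal S} (hm : m.IsMaximal) :
    (⊥ : Ideal S).jacobson ≤ Module.annihilator S (S ⧸ m) := by
  intro s hs
  rw [mem_annQ]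
  intro t
  by_cases ht : t ∈ m
  · exact m.smul_mem s ht
  · haveI := quotSimple hm
    set g := LinearMap.toSpanSingleton S (S ⧸ m) (Submodule.Quotient.mk t) with hgdef
    have hg0 : g 1 ≠ 0 := by
      rw [hgdef, LinearMap.toSpanSingleton_apply, one_smul, Ne,
        Submodule.Quotient.mk_eq_zero]
      exact ht
    have hrange : LinearMap.range g = ⊤ := by
      rcases eq_bot_or_eq_top (LinearMap.range g) with h | h
      · exact absurd (h ▸ LinearMap.mem_range_self g 1 : g 1 ∈ (⊥ : Submodule S (S ⧸ m)))
          (by simpa using hg0)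
      · exact h
    have hcoatom : IsCoatom (LinearMap.ker g) :=
      LinearMap.isCoatom_ker_of_surjective (LinearMap.range_eq_top.mp hrange)
    have hmax : Ideal.IsMaximal (LinearMap.ker g : Ideal S) := Ideal.isMaximal_def.mpr hcoatom
    have hmemset : (LinearMap.ker g : Ideal S) ∈ {J : Ideal S | ⊥ ≤ J ∧ J.IsMaximal} :=
      ⟨bot_le, hmax⟩
    have hle2 : (⊥ : Ideal S).jacobson ≤ LinearMap.ker g := sInf_le hmemset
    have hsk : s ∈ LinearMap.ker g := hle2 hs
    rw [LinearMap.mem_ker, hgdef, LinearMap.toSpanSingleton_apply,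
      ← Submodule.Quotient.mk_smul, smul_eq_mul, Submodule.Quotient.mk_eq_zero] at hsk
    exact hsk

lemma span_mul_le {y : S} {M' : Type} [AddCommGroup M'] [Module S M']
    (hy : y ∈ Module.annihilator S M') {x : S}
    (hx : x ∈ Submodule.span k {z : S | ∃ a b : S, z = a * y * b}) :
    x ∈ Module.annihilator S M' := by
  have hle : Submodule.span k {z : S | ∃ a b : S, z = a * y * b}
      ≤ (Module.annihilator S M').restrictScalars k := by
    rw [Submodule.span_le]
    rintro _ ⟨a, b, rfl⟩
    have h1 : y * b ∈ Module.annihilator S M' := mul_mem_ann hy b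
    have h2 : a * (y * b) ∈ Module.annihilator S M' :=
      (Module.annihilator S M').smul_mem a h1
    show a * y * b ∈ Module.annihilator S M'
    rwa [mul_assoc]
  exact hle hx

theorem reach (hsplit : IsSplitAlgebra k S) {m : Ideal S} (hm : m.IsMaximal) {y : S}
    (hy : y ∉ Module.annihilator S (S ⧸ m)) (s : S) :
    ∃ x ∈ Submodule.span k {z : S | ∃ a b : S, z = a * y * b},
      s - x ∈ Module.annihilator S (S ⧸ m) := by
  haveI := quotFD (k := k) m
  haveI := quotSimple hm
  have hψ : PaperAux2.rho k S (S ⧸ m) y ≠ 0 := by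
    intro h
    apply hy
    rw [Module.mem_annihilator]
    intro v
    have := LinearMap.ext_iff.mp h v
    rwa [LinearMap.zero_apply] at this
  obtain ⟨d, A, B, hfac⟩ := PaperAux4.endo_factor (k := k) hψ (PaperAux2.rho k S (S ⧸ m) s)
  choose a ha using fun i => PaperAux3.density hsplit (A i)
  choose c hc using fun i => PaperAux3.density hsplit (B i)
  refine ⟨∑ i, a i * y * c i, ?_, ?_⟩
  · exact Submodule.sum_mem _ fun i _ => Submodule.subset_span ⟨a i, c i, rfl⟩
  · rw [Module.mem_annihilator]
    intro v
    have h1 : (∑ i, a i * y * c i) • v = ∑ i, (A i) (y • ((B i) v)) := by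
      rw [Finset.sum_smul]
      refine Finset.sum_congr rfl fun i _ => ?_
      rw [mul_smul, mul_smul, hc i v, ← ha i (y • (B i) v)]
    have h2 : s • v = ∑ i, (A i) (y • ((B i) v)) := by
      have : s • v = (PaperAux2.rho k S (S ⧸ m) s) v := rfl
      rw [this, hfac, LinearMap.sum_apply]
      exact Finset.sum_congr rfl fun i _ => rfl
    rw [sub_smul, h1, h2, sub_self]

theorem comax (hsplit : IsSplitAlgebra k S) {m₁ m₂ : Ideal S}
    (h1 : m₁.IsMaximal) (h2 : m₂.IsMaximal)
    (hne : Module.annihilator S (S ⧸ m₁) ≠ Module.annihilator S (S ⧸ m₂)) (s : S) :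
    ∃ x ∈ Module.annihilator S (S ⧸ m₂), s - x ∈ Module.annihilator S (S ⧸ m₁) := by
  have hex : ∃ y, y ∈ Module.annihilator S (S ⧸ m₂) ∧ y ∉ Module.annihilator S (S ⧸ m₁) := by
    by_contra h
    push_neg at h
    apply hne
    refine le_antisymm ?_ h
    by_contra hle
    obtain ⟨y, hy1, hy2⟩ := SetLike.not_le_iff_exists.mp hle
    obtain ⟨x, hxspan, hxd⟩ := reach hsplit h2 hy2 1
    have hx1 : x ∈ Module.annihilator S (S ⧸ m₁) := span_mul_le hy1 hxspan
    have h1' : (1 : S) ∈ Module.annihilator S (S ⧸ m₁) := by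
      have := (Module.annihilator S (S ⧸ m₁)).add_mem (h _ hxd) hx1
      rwa [sub_add_cancel] at this
    exact one_not_mem_annQ h1.ne_top h1'
  obtain ⟨y, hy2, hy1⟩ := hex
  obtain ⟨x, hxspan, hxd⟩ := reach hsplit h1 hy1 s
  exact ⟨x, span_mul_le hy2 hxspan, hxd⟩

end PaperAux5



namespace PaperAux6

set_option linter.unusedSectionVars false
open Paper

variable {k S : Type} [Field k] [Ring S] [Algebra k S] [FiniteDimensional k S]

theorem crt_unit (hsplit : IsSplitAlgebra k S) {m₀ : Ideal S} (h₀ : m₀.IsMaximal)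
    (F : Finset (Ideal S))
    (hF : ∀ K ∈ F, ∃ m : Ideal S, m.IsMaximal ∧ Module.annihilator S (S ⧸ m) = K) :
    ∃ u : S, (∀ K ∈ F, K ≠ Module.annihilator S (S ⧸ m₀) → u ∈ K)
      ∧ 1 - u ∈ Module.annihilator S (S ⧸ m₀) := by
  classical
  induction F using Finset.induction_on with
  | empty =>
      exact ⟨1, fun K hK => absurd hK (Finset.notMem_empty K),
        by rw [sub_self]; exact zero_mem _⟩
  | @insert K F hKF IH =>
      obtain ⟨u, hu, hu0⟩ := IH (fun K' hK' => hF K' (Finset.mem_insert_of_mem hK'))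
      by_cases hc : K = Module.annihilator S (S ⧸ m₀)
      · refine ⟨u, fun K' hK' hne => ?_, hu0⟩
        rcases Finset.mem_insert.mp hK' with rfl | h
        · exact absurd hc hne
        · exact hu K' h hne
      · obtain ⟨m, hm, hKm⟩ := hF K (Finset.mem_insert_self K F)
        have hne' : Module.annihilator S (S ⧸ m₀) ≠ Module.annihilator S (S ⧸ m) := by
          rw [hKm]; exact fun h => hc (hKm ▸ h.symm)
        obtain ⟨d, hd, hd0⟩ := PaperAux5.comax hsplit h₀ hm hne' 1
        refine ⟨u * d, ?_, ?_⟩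
        · intro K' hK' hneK'
          rcases Finset.mem_insert.mp hK' with rfl | h
          · rw [← hKm] at *
            exact (Module.annihilator S (S ⧸ m)).smul_mem u hd
          · obtain ⟨m'', hm'', hKm''⟩ := hF K' (Finset.mem_insert_of_mem h)
            rw [← hKm'']
            exact PaperAux5.mul_mem_ann (by rw [hKm'']; exact hu K' h hneK') d
        · have hexp : (1 : S) - u * d = (1 - u) + u * (1 - d) := by noncomm_ring
          rw [hexp]
          exact add_mem hu0 ((Module.annihilator S (S ⧸ m₀)).smul_mem u hd0)

theorem crt_lift (hsplit : IsSplitAlgebra k S) {m₀ : Ideal S} (h₀ : m₀.IsMaximal)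
    (F : Finset (Ideal S))
    (hF : ∀ K ∈ F, ∃ m : Ideal S, m.IsMaximal ∧ Module.annihilator S (S ⧸ m) = K)
    (φ : (S ⧸ m₀) →ₗ[k] (S ⧸ m₀)) :
    ∃ a : S, (∀ v : S ⧸ m₀, a • v = φ v)
      ∧ ∀ K ∈ F, K ≠ Module.annihilator S (S ⧸ m₀) → a ∈ K := by
  haveI := PaperAux5.quotFD (k := k) m₀
  haveI := PaperAux5.quotSimple h₀
  obtain ⟨s₀, hs₀⟩ := PaperAux3.density hsplit φ
  obtain ⟨u, hu, hu0⟩ := crt_unit hsplit h₀ F hF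
  refine ⟨u * s₀, fun v => ?_, fun K hK hne => ?_⟩
  · have h1 : (u * s₀) • v = s₀ • v - (1 - u) • (s₀ • v) := by
      rw [sub_smul, one_smul, mul_smul]
      abel
    have h2 : (1 - u) • (s₀ • v) = 0 := Module.mem_annihilator.mp hu0 _
    rw [h1, h2, sub_zero, hs₀ v]
  · obtain ⟨m'', hm'', hKm''⟩ := hF K hK
    rw [← hKm'']
    exact PaperAux5.mul_mem_ann (by rw [hKm'']; exact hu K hK hne) s₀

theorem exists_finset_inf {S : Type} [Ring S] [IsArtinian S S] (C : Set (Ideal S)) :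
    ∃ F : Finset (Ideal S), (↑F : Set (Ideal S)) ⊆ C ∧ sInf (↑F : Set (Ideal S)) = sInf C := by
  classical
  have hwf : WellFounded ((· < ·) : Ideal S → Ideal S → Prop) := wellFounded_lt
  set D := {I : Ideal S | ∃ F : Finset (Ideal S), (↑F : Set (Ideal S)) ⊆ C ∧ sInf ↑F = I}
    with hD
  have hne : D.Nonempty := ⟨sInf (↑(∅ : Finset (Ideal S)) : Set (Ideal S)),
    ⟨∅, by simp, rfl⟩⟩
  obtain ⟨I₀, hI₀D, hmin⟩ := hwf.has_min D hne
  obtain ⟨F₀, hF₀C, hF₀⟩ := hI₀D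
  have hle : ∀ c ∈ C, I₀ ≤ c := by
    intro c hc
    by_contra hlt
    have hmem : sInf (↑(insert c F₀) : Set (Ideal S)) ∈ D :=
      ⟨insert c F₀, by rw [Finset.coe_insert]; exact Set.insert_subset hc hF₀C, rfl⟩
    apply hmin _ hmem
    rw [Finset.coe_insert, sInf_insert, hF₀]
    exact lt_of_le_of_ne inf_le_right (fun h => hlt (inf_eq_right.mp h))
  refine ⟨F₀, hF₀C, le_antisymm ?_ (sInf_le_sInf hF₀C)⟩
  rw [hF₀]
  exact le_sInf hle

theorem core (hsplit : IsSplitAlgebra k S) {s : S}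
    (hs : ∀ (m : Ideal S), m.IsMaximal →
      LinearMap.trace k (S ⧸ m) (PaperAux2.rho k S (S ⧸ m) s) = 0) :
    s ∈ PaperAux2.Tsub k S := by
  classical
  set C := {K : Ideal S | ∃ m : Ideal S, m.IsMaximal ∧ Module.annihilator S (S ⧸ m) = K}
    with hC
  haveI : IsArtinian S S := isArtinian_of_tower k inferInstance
  obtain ⟨F, hFC, hFinf⟩ := exists_finset_inf C
  have hJ : sInf C = (⊥ : Ideal S).jacobson := by
    have hdef : (⊥ : Ideal S).jacobson = sInf {J : Ideal S | ⊥ ≤ J ∧ J.IsMaximal} := rfl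
    apply le_antisymm
    · rw [hdef]
      apply le_sInf
      rintro J ⟨-, hJmax⟩
      exact le_trans (sInf_le ⟨J, hJmax, rfl⟩) (PaperAux5.annQ_le J)
    · apply le_sInf
      rintro K ⟨m, hm, rfl⟩
      exact PaperAux5.jacobson_le_annQ hm
  have hsel : ∀ K ∈ F, ∃ m : Ideal S, m.IsMaximal ∧ Module.annihilator S (S ⧸ m) = K :=
    fun K hK => hFC hK
  have main : ∀ K, K ∈ F → ∃ x : S, x ∈ commutatorSpan k S
      ∧ (∀ K' ∈ F, K' ≠ K → x ∈ K') ∧ s - x ∈ K := by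
    intro K hK
    obtain ⟨m, hm, hKm⟩ := hsel K hK
    haveI := PaperAux5.quotFD (k := k) m
    haveI := PaperAux5.quotSimple hm
    set ρl : S →ₗ[k] ((S ⧸ m) →ₗ[k] (S ⧸ m)) := (PaperAux2.rho k S (S ⧸ m)).toLinearMap
      with hρl
    set Q : Submodule k S := (commutatorSpan k S) ⊓
      (⨅ K' ∈ F.erase K, Submodule.restrictScalars k K') with hQ
    have hFerase : ∀ K' ∈ F.erase K, ∃ m' : Ideal S, m'.IsMaximal
        ∧ Module.annihilator S (S ⧸ m') = K' :=
      fun K' hK' => hsel K' (Finset.mem_of_mem_erase hK')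
    have hKne : ∀ K' ∈ F.erase K, K' ≠ Module.annihilator S (S ⧸ m) :=
      fun K' hK' => hKm ▸ Finset.ne_of_mem_erase hK'
    have hspan : Submodule.span k
        {x : (S ⧸ m) →ₗ[k] (S ⧸ m) | ∃ a b, x = a * b - b * a} ≤ Q.map ρl := by
      rw [Submodule.span_le]
      rintro _ ⟨x, y, rfl⟩
      obtain ⟨a, hax, haK⟩ := crt_lift hsplit hm (F.erase K) hFerase x
      obtain ⟨b, hbx, hbK⟩ := crt_lift hsplit hm (F.erase K) hFerase y
      refine ⟨a * b - b * a, Submodule.mem_inf.mpr ⟨Submodule.subset_span ⟨a, b, rfl⟩, ?_⟩, ?_⟩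
      · rw [Submodule.mem_iInf]
        intro K'
        rw [Submodule.mem_iInf]
        intro hK'
        obtain ⟨m'', hm'', hKm''⟩ := hFerase K' hK'
        have haK' : a ∈ K' := haK K' hK' (hKne K' hK')
        have hbK' : b ∈ K' := hbK K' hK' (hKne K' hK')
        show a * b - b * a ∈ K'
        rw [← hKm'']
        refine sub_mem (PaperAux5.mul_mem_ann (by rw [hKm'']; exact haK') b)
          (PaperAux5.mul_mem_ann (by rw [hKm'']; exact hbK') a)
      · have hra : PaperAux2.rho k S (S ⧸ m) a = x := LinearMap.ext fun v => hax v
        have hrb : PaperAux2.rho k S (S ⧸ m) b = y := LinearMap.ext fun v => hbx v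
        show (PaperAux2.rho k S (S ⧸ m)) (a * b - b * a) = x * y - y * x
        rw [map_sub, map_mul, map_mul, hra, hrb]
    have hmem := PaperAux5.trace_endo_mem (k := k) (PaperAux2.rho k S (S ⧸ m) s) (hs m hm)
    obtain ⟨x, hxQ, hxe⟩ := hspan hmem
    obtain ⟨hxcomm, hxinf⟩ := Submodule.mem_inf.mp hxQ
    refine ⟨x, hxcomm, ?_, ?_⟩
    · intro K' hK' hne
      have h1 : K' ∈ F.erase K := Finset.mem_erase.mpr ⟨hne, hK'⟩
      have h2 := (Submodule.mem_iInf _).mp hxinf K'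
      exact (Submodule.mem_iInf _).mp h2 h1
    · rw [← hKm, Module.mem_annihilator]
      intro v
      have h1 : x • v = (PaperAux2.rho k S (S ⧸ m)) s v := by
        rw [← hxe]; rfl
      rw [sub_smul, h1]
      show s • v - (PaperAux2.rho k S (S ⧸ m)) s v = 0
      rw [sub_eq_zero]
      rfl
  choose xf hx1 hx2 hx3 using main
  set f : Ideal S → S := fun K => if h : K ∈ F then xf K h else 0 with hf
  set s' : S := ∑ K ∈ F, f K with hs'
  have hs'comm : s' ∈ commutatorSpan k S := by
    apply Submodule.sum_mem
    intro K hK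
    have : f K = xf K hK := dif_pos hK
    rw [this]
    exact hx1 K hK
  have hdiff : s - s' ∈ Submodule.restrictScalars k ((⊥ : Ideal S).jacobson) := by
    show s - s' ∈ (⊥ : Ideal S).jacobson
    rw [← hJ, ← hFinf, Submodule.mem_sInf]
    intro K hK
    rw [Finset.mem_coe] at hK
    have hsplit' : s - s' = (s - f K) - ∑ K' ∈ F.erase K, f K' := by
      rw [hs', ← Finset.add_sum_erase F f hK, sub_add_eq_sub_sub]
    rw [hsplit']
    refine sub_mem ?_ (Submodule.sum_mem _ fun K' hK' => ?_)
    · have : f K = xf K hK := dif_pos hK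
      rw [this]
      exact hx3 K hK
    · have hK'F : K' ∈ F := Finset.mem_of_mem_erase hK'
      have hne : K' ≠ K := Finset.ne_of_mem_erase hK'
      have : f K' = xf K' hK'F := dif_pos hK'F
      rw [this]
      exact hx2 K' hK'F K hK (Ne.symm hne)
  show s ∈ commutatorSpan k S ⊔ Submodule.restrictScalars k ((⊥ : Ideal S).jacobson)
  exact Submodule.mem_sup.mpr ⟨s', hs'comm, s - s', hdiff, by rw [add_sub_cancel]⟩

end PaperAux6



namespace PaperAux7

open Paper

variable (k S : Type) [Field k] [Ring S] [Algebra k S] [FiniteDimensional k S]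

/-- The bundled finite-dimensional module `S ⧸ m`. -/
noncomputable def quotMod (m : Ideal S) : FDModule k S :=
  letI := PaperAux5.quotFD (k := k) m
  FDModule.mk (V := S ⧸ m)

lemma natChar_quot (m : Ideal S) (s : S) :
    natChar (quotMod k S m) s
      = LinearMap.trace k (S ⧸ m) (PaperAux2.rho k S (S ⧸ m) s) := by
  letI := PaperAux5.quotFD (k := k) m
  show twCharOf k S (S ⧸ m) LinearMap.id s = _
  rw [PaperAux2.twCharOf_apply]
  have hid : (LinearMap.id : (S ⧸ m) →ₗ[k] (S ⧸ m)) = 1 := rfl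
  rw [hid, one_mul]

end PaperAux7


open Paper in
/-- Remark 3.3: `S` is constrained if and only if the pair `(S,S)` is constrained,
i.e. `C₀(S,S) = C(S,S)`.  Moreover if `k` is algebraically closed then `C₀(S,S) = C₀(S)`. -/
theorem statement6 (k S : Type) [Field k] [Ring S] [Algebra k S] [FiniteDimensional k S]
    (hsplit : IsSplitAlgebra k S) :
    (IsConstrained k S ↔ pairC0 k S = (commutatorSpan k S).dualAnnihilator) ∧
      (IsAlgClosed k → pairC0 k S = charSpan k S) := by
  classical
  set T := PaperAux2.Tsub k S with hT
  have hA : pairC0 k S ≤ T.dualAnnihilator := PaperAux2.pairC0_le_dualAnnihilator k S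
  have hB : charSpan k S ≤ pairC0 k S := PaperAux2.charSpan_le_pairC0 k S
  set Uset : Set (Module.Dual k S) :=
    {f | ∃ m : Ideal S, m.IsMaximal ∧ f = natChar (PaperAux7.quotMod k S m)} with hUset
  set U : Submodule k (Module.Dual k S) := Submodule.span k Uset with hU
  have hUchar : U ≤ charSpan k S := by
    rw [hU, Submodule.span_le]
    rintro f ⟨m, hm, rfl⟩
    exact Submodule.subset_span ⟨PaperAux7.quotMod k S m, rfl⟩
  have hCU : T.dualAnnihilator ≤ U := by
    have hsub : U.dualCoannihilator ≤ T := by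
      intro s hsmem
      rw [Submodule.mem_dualCoannihilator] at hsmem
      apply PaperAux6.core hsplit
      intro m hm
      have hmemU : natChar (PaperAux7.quotMod k S m) ∈ U :=
        Submodule.subset_span ⟨m, hm, rfl⟩
      have h0 := hsmem _ hmemU
      rwa [PaperAux7.natChar_quot] at h0
    calc T.dualAnnihilator ≤ (U.dualCoannihilator).dualAnnihilator :=
          Submodule.dualAnnihilator_anti hsub
    _ = U := Subspace.dualCoannihilator_dualAnnihilator_eq
  have hML1 : pairC0 k S = T.dualAnnihilator :=
    le_antisymm hA (le_trans hCU (le_trans hUchar hB))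
  have hML2 : charSpan k S = T.dualAnnihilator :=
    le_antisymm (le_trans hB hA) (le_trans hCU hUchar)
  constructor
  · constructor
    · intro hcon
      have hJle : Submodule.restrictScalars k ((⊥ : Ideal S).jacobson)
          ≤ commutatorSpan k S := fun x hx => hcon hx
      have hTeq : T = commutatorSpan k S := by
        rw [hT]
        show commutatorSpan k S ⊔ Submodule.restrictScalars k ((⊥ : Ideal S).jacobson) = _
        exact sup_eq_left.mpr hJle
      rw [hML1, hTeq]
    · intro hpair
      have hTann : T.dualAnnihilator = (commutatorSpan k S).dualAnnihilator := by
        rw [← hML1, hpair]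
      have hTeq : T = commutatorSpan k S := Subspace.dualAnnihilator_inj.mp hTann
      intro x hx
      have hxT : x ∈ T := by
        rw [hT]
        exact Submodule.mem_sup_right hx
      rw [hTeq] at hxT
      exact hxT
  · intro _
    rw [hML1, ← hML2]
end

section
/- Let k be a field, S a finite-dimensional split k-algebra, R a subalgebra of S, and M a finite-dimensional left S-module affording the representation ρ: S → End_k(M). Then C(S,R) = C₀(S,R;M) if and only if the following holds: for every s ∈ S, if ρ(s) lies in [R, End_k(M)] (the span of all ρ(r)φ − φρ(r), r ∈ R, φ ∈ End_k(M)), then s ∈ [R,S]. -/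
/-!
Under the trace pairing `End_k(M) ≅ End_k(M)*`, `θ ↦ trace (θ ∘ ·)`, the twisted trace `χ_θ` is
the pullback along `ρ` of the functional paired with `θ`, and `θ` commutes with `ρ(R)` exactly
when that functional kills `[R, End_k(M)]`. Hence `C₀(S,R;M)` is the pullback of the annihilator
of `[R, End_k(M)]`, i.e. the annihilator of `ρ⁻¹[R, End_k(M)]`. This subspace contains `[R,S]`,
so the two annihilators agree iff `ρ⁻¹[R, End_k(M)] = [R,S]`.
-/

open TensorProduct

namespace Paper

variable (k S : Type*) [Field k] [Ring S] [Algebra k S]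

/-- `[R,S]`: the `k`-span of all commutators `r*s - s*r` with `r ∈ R`, `s ∈ S`. -/
def relCommutator (R : Subalgebra k S) : Submodule k S :=
  Submodule.span k {x : S | ∃ r ∈ R, ∃ s : S, x = r * s - s * r}

/-- `C₀(S,R)`: the span of all twisted trace functions `χ_θ` with `θ ∈ End_R(V)`, `V` ranging
over finite-dimensional `S`-modules. -/
noncomputable def relC0 (R : Subalgebra k S) : Submodule k (Module.Dual k S) :=
  Submodule.span k {f | ∃ (N : FDModule k S) (θ : N.V →ₗ[k] N.V),
    (∀ r ∈ R, ∀ v : N.V, θ (r • v) = r • θ v) ∧ f = twChar N θ}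

/-- `R` is a constrained subalgebra of `S` if `C₀(S,R) = C(S,R)`, where
`C(S,R) = {f ∈ S* : f vanishes on [R,S]}`. -/
def IsConstrainedSubalgebra (R : Subalgebra k S) : Prop :=
  relC0 k S R = (relCommutator k S R).dualAnnihilator

end Paper

open Module

theorem Submodule.dualAnnihilator_comap_eq_map_dualMap {K V₁ V₂ : Type*} [Field K]
    [AddCommGroup V₁] [Module K V₁] [AddCommGroup V₂] [Module K V₂]
    (f : V₁ →ₗ[K] V₂) (W : Submodule K V₂) :
    (W.comap f).dualAnnihilator = W.dualAnnihilator.map f.dualMap := by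
  rw [← W.range_dualMap_mkQ_eq, ← LinearMap.range_comp, LinearMap.dualMap_comp_dualMap,
    LinearMap.range_dualMap_eq_dualAnnihilator_ker, LinearMap.ker_comp, Submodule.ker_mkQ]

namespace Module.End

variable (k M : Type*) [Field k] [AddCommGroup M] [Module k M]

noncomputable def tracePairing : End k M →ₗ[k] Dual k (End k M) :=
  (LinearMap.mul k (End k M)).compr₂ (LinearMap.trace k M)

/-- `[A, End_k(M)]`. -/
def commutatorSpanOf (A : Set (End k M)) : Submodule k (End k M) :=
  Submodule.span k {x | ∃ a ∈ A, ∃ φ : End k M, x = a * φ - φ * a}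

variable {k M}

@[simp]
theorem tracePairing_apply (θ φ : End k M) :
    tracePairing k M θ φ = LinearMap.trace k M (θ * φ) := rfl

theorem trace_mul_commutator (θ a φ : End k M) :
    LinearMap.trace k M (θ * (a * φ - φ * a)) = LinearMap.trace k M ((θ * a - a * θ) * φ) := by
  rw [mul_sub, sub_mul, map_sub, map_sub, ← mul_assoc,
    LinearMap.trace_mul_cycle' (f := θ) (g := φ) (h := a), mul_assoc a]

variable [FiniteDimensional k M]

theorem tracePairing_injective : Function.Injective (tracePairing k M) := by
  rw [← LinearMap.ker_eq_bot, LinearMap.ker_eq_bot']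
  intro θ hθ
  ext v
  rw [LinearMap.zero_apply, ← Module.forall_dual_apply_eq_zero_iff k]
  intro f
  -- test `θ` against the rank-one maps `x ↦ f x • v`
  have hrank_one : θ * dualTensorHom k M M (f ⊗ₜ v) = dualTensorHom k M M (f ⊗ₜ θ v) := by
    ext x
    simp
  simpa [hrank_one, LinearMap.trace_eq_contract_apply] using
    LinearMap.congr_fun hθ (dualTensorHom k M M (f ⊗ₜ v))

theorem tracePairing_bijective : Function.Bijective (tracePairing k M) :=
  ⟨tracePairing_injective, (LinearMap.injective_iff_surjective_of_finrank_eq_finrank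
    (Subspace.dual_finrank_eq).symm).mp tracePairing_injective⟩

theorem tracePairing_mem_dualAnnihilator_commutatorSpanOf_iff (A : Set (End k M)) (θ : End k M) :
    tracePairing k M θ ∈ (commutatorSpanOf k M A).dualAnnihilator ↔ ∀ a ∈ A, Commute θ a := by
  have hcommute (a : End k M) :
      (∀ φ, tracePairing k M θ (a * φ - φ * a) = 0) ↔ Commute θ a := by
    rw [commute_iff_eq, ← sub_eq_zero, ← tracePairing_injective.eq_iff' (map_zero _),
      LinearMap.ext_iff]
    simp only [tracePairing_apply, trace_mul_commutator, LinearMap.zero_apply]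
  rw [Submodule.mem_dualAnnihilator]
  change commutatorSpanOf k M A ≤ LinearMap.ker (tracePairing k M θ) ↔ _
  rw [commutatorSpanOf, Submodule.span_le, Set.ofPred_subset]
  simp only [SetLike.mem_coe, LinearMap.mem_ker, ← hcommute]
  exact ⟨fun h a ha φ ↦ h _ ⟨a, ha, φ, rfl⟩, fun h _ ⟨a, ha, φ, hx⟩ ↦ hx ▸ h a ha φ⟩

theorem image_tracePairing_centralizer (A : Set (End k M)) :
    tracePairing k M '' {θ | ∀ a ∈ A, Commute θ a} = (commutatorSpanOf k M A).dualAnnihilator := by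
  ext f
  obtain ⟨θ, rfl⟩ := tracePairing_bijective.2 f
  rw [Set.mem_image, SetLike.mem_coe, tracePairing_mem_dualAnnihilator_commutatorSpanOf_iff]
  simp only [tracePairing_injective.eq_iff, exists_eq_right, Set.mem_ofPred_eq]

end Module.End

namespace Paper

open Module.End

variable {k S : Type*} [Field k] [Ring S] [Algebra k S]
  {M : Type*} [AddCommGroup M] [Module k M] [Module S M] [IsScalarTower k S M]
  [SMulCommClass S k M]

theorem commute_lsmul_iff (θ : End k M) (s : S) :
    Commute θ (Algebra.lsmul k k M s) ↔ ∀ v, θ (s • v) = s • θ v :=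
  LinearMap.ext_iff

theorem twCharOf_eq_dualMap_tracePairing (θ : End k M) :
    twCharOf k S M θ = (Algebra.lsmul k k M).toLinearMap.dualMap (tracePairing k M θ) := rfl

variable (k S M) in
/-- `ρ⁻¹[R, End_k(M)]`. -/
def relCommutatorPullback (R : Subalgebra k S) : Submodule k S :=
  (commutatorSpanOf k M (Algebra.lsmul k k M '' (R : Set S))).comap
    (Algebra.lsmul k k M : S →ₐ[k] End k M).toLinearMap

theorem mem_relCommutatorPullback_iff (R : Subalgebra k S) (s : S) :
    s ∈ relCommutatorPullback k S M R ↔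
      Algebra.lsmul k k M s ∈ Submodule.span k {x : End k M | ∃ r ∈ R, ∃ φ : End k M,
        x = Algebra.lsmul k k M r ∘ₗ φ - φ ∘ₗ Algebra.lsmul k k M r} := by
  simp only [relCommutatorPullback, commutatorSpanOf, Set.exists_mem_image]
  rfl

theorem relCommutator_le_relCommutatorPullback (R : Subalgebra k S) :
    relCommutator k S R ≤ relCommutatorPullback k S M R := by
  rw [relCommutator, Submodule.span_le]
  rintro _ ⟨r, hr, s, rfl⟩
  refine Submodule.subset_span ⟨_, ⟨r, hr, rfl⟩, Algebra.lsmul k k M s, ?_⟩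
  simp only [AlgHom.toLinearMap_apply, map_sub, map_mul]

theorem setOf_twCharOf_eq_dualAnnihilator [FiniteDimensional k M] (R : Subalgebra k S) :
    {f | ∃ θ : End k M, (∀ r ∈ R, ∀ v : M, θ (r • v) = r • θ v) ∧ f = twCharOf k S M θ} =
      ((relCommutatorPullback k S M R).dualAnnihilator : Set (Dual k S)) := by
  rw [relCommutatorPullback, Submodule.dualAnnihilator_comap_eq_map_dualMap, Submodule.map_coe,
    ← image_tracePairing_centralizer, Set.image_image]
  simp only [Set.forall_mem_image, SetLike.mem_coe, commute_lsmul_iff]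
  ext f
  simp only [Set.mem_ofPred_eq, Set.mem_image, twCharOf_eq_dualMap_tracePairing, eq_comm]

end Paper

open Paper in
theorem statement8_general (k S : Type) [Field k] [Ring S] [Algebra k S]
    (R : Subalgebra k S)
    (M : Type) [AddCommGroup M] [Module k M] [Module S M] [IsScalarTower k S M]
    [SMulCommClass S k M] [FiniteDimensional k M] :
    (((relCommutator k S R).dualAnnihilator : Set (Module.Dual k S)) =
        {f | ∃ θ : M →ₗ[k] M, (∀ r ∈ R, ∀ v : M, θ (r • v) = r • θ v) ∧
          f = twCharOf k S M θ}) ↔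
      (∀ s : S, (Algebra.lsmul k k M s : M →ₗ[k] M) ∈
          Submodule.span k {x : M →ₗ[k] M | ∃ r ∈ R, ∃ φ : M →ₗ[k] M,
            x = (Algebra.lsmul k k M (r : S)) ∘ₗ φ - φ ∘ₗ (Algebra.lsmul k k M (r : S))} →
        s ∈ relCommutator k S R) := by
  rw [setOf_twCharOf_eq_dualAnnihilator, SetLike.coe_set_eq, Subspace.dualAnnihilator_inj]
  simp only [← mem_relCommutatorPullback_iff]
  exact ⟨fun h s hs ↦ h ▸ hs, fun h ↦ (relCommutator_le_relCommutatorPullback R).antisymm h⟩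

open Paper in
/-- Proposition 3.5(i): for a subalgebra `R ⊆ S` and a finite-dimensional `S`-module `M`
with representation `ρ`, we have `C(S,R) = C₀(S,R;M)` if and only if every `s ∈ S` with
`ρ(s) ∈ [R, End_k(M)]` lies in `[R,S]` (injectivity of `H₀(R,S) → H₀(R,End_k(M))`). -/
theorem statement8 (k S : Type) [Field k] [Ring S] [Algebra k S] [FiniteDimensional k S]
    (hsplit : IsSplitAlgebra k S) (R : Subalgebra k S)
    (M : Type) [AddCommGroup M] [Module k M] [Module S M] [IsScalarTower k S M]
    [SMulCommClass S k M] [FiniteDimensional k M] :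
    (((relCommutator k S R).dualAnnihilator : Set (Module.Dual k S)) =
        {f | ∃ θ : M →ₗ[k] M, (∀ r ∈ R, ∀ v : M, θ (r • v) = r • θ v) ∧
          f = twCharOf k S M θ}) ↔
      (∀ s : S, (Algebra.lsmul k k M s : M →ₗ[k] M) ∈
          Submodule.span k {x : M →ₗ[k] M | ∃ r ∈ R, ∃ φ : M →ₗ[k] M,
            x = (Algebra.lsmul k k M (r : S)) ∘ₗ φ - φ ∘ₗ (Algebra.lsmul k k M (r : S))} →
        s ∈ relCommutator k S R) :=
  statement8_general k S R M
end

section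
/- Let k be a field, S a finite-dimensional split k-algebra, R a constrained subalgebra of S, and K an extension field of k. Then R_K = K ⊗_k R is a constrained subalgebra of S_K = K ⊗_k S. -/
open TensorProduct

namespace Paper

section Aux

variable {k S : Type*} [Field k] [Ring S] [Algebra k S]

theorem twChar_apply' (N : FDModule k S) (θ : N.V →ₗ[k] N.V) (s : S) :
    twChar N θ s =
      LinearMap.trace k N.V (θ * (Algebra.lsmul k k N.V s : Module.End k N.V)) :=
  rfl

/-- The easy inclusion `C₀(S,R) ⊆ C(S,R)`. -/
theorem relC0_le_dualAnnihilator (R : Subalgebra k S) :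
    relC0 k S R ≤ (relCommutator k S R).dualAnnihilator := by
  rw [relC0, Submodule.span_le]
  rintro f ⟨N, θ, hθ, rfl⟩
  rw [SetLike.mem_coe, Submodule.mem_dualAnnihilator]
  intro x hx
  have hker : relCommutator k S R ≤ LinearMap.ker (twChar N θ) := by
    rw [relCommutator, Submodule.span_le]
    rintro _ ⟨r, hr, s, rfl⟩
    rw [SetLike.mem_coe, LinearMap.mem_ker, map_sub]
    set ρ : S →ₐ[k] Module.End k N.V := Algebra.lsmul k k N.V with hρ
    have hc : θ * ρ r = ρ r * θ := LinearMap.ext fun v => hθ r hr v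
    have h1 : twChar N θ (r * s) = twChar N θ (s * r) := by
      rw [twChar_apply', twChar_apply', ← hρ, map_mul ρ r s, map_mul ρ s r]
      calc LinearMap.trace k N.V (θ * (ρ r * ρ s))
          = LinearMap.trace k N.V ((θ * ρ r) * ρ s) := by rw [mul_assoc]
        _ = LinearMap.trace k N.V ((ρ r * θ) * ρ s) := by rw [hc]
        _ = LinearMap.trace k N.V (ρ r * (θ * ρ s)) := by rw [mul_assoc]
        _ = LinearMap.trace k N.V ((θ * ρ s) * ρ r) :=
            LinearMap.trace_mul_comm k (ρ r) (θ * ρ s)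
        _ = LinearMap.trace k N.V (θ * (ρ s * ρ r)) := by rw [mul_assoc]
    rw [h1, sub_self]
  exact LinearMap.mem_ker.mp (hker hx)

end Aux

section BaseChange

variable {k K S : Type} [Field k] [Field K] [Algebra k K] [Ring S] [Algebra k S]

/-- The representation of `K ⊗[k] S` on `K ⊗[k] N.V`. -/
noncomputable def bcPsi (N : FDModule k S) :
    (K ⊗[k] S) →ₐ[K] Module.End K (K ⊗[k] N.V) :=
  Algebra.TensorProduct.lift (Algebra.ofId K _)
    ((Module.End.baseChangeHom k K N.V).comp (Algebra.lsmul k k N.V))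
    (fun a x => show Commute _ _ from Algebra.commutes a _)

/-- Base change of a bundled finite-dimensional module. -/
noncomputable def bcFD (N : FDModule k S) : FDModule K (K ⊗[k] S) :=
  letI m : Module (K ⊗[k] S) (K ⊗[k] N.V) := Module.compHom _ (bcPsi (K := K) N).toRingHom
  { V := K ⊗[k] N.V
    modS := m
    tower := ⟨fun c x v => by
      show (bcPsi N) (c • x) v = c • (bcPsi N) x v
      rw [map_smul]
      rfl⟩
    scomm := ⟨fun x c v => by
      show (bcPsi N) x (c • v) = c • (bcPsi N) x v
      exact map_smul ((bcPsi N) x) c v⟩ }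

theorem bcFD_smul (N : FDModule k S) (x : K ⊗[k] S) (v : (bcFD (K := K) N).V) :
    x • v = bcPsi (K := K) N x v := rfl

/-- Base change of an endomorphism, typed at the bundled base-changed module. -/
noncomputable def bcTheta (N : FDModule k S) (θ : N.V →ₗ[k] N.V) :
    (bcFD (K := K) N).V →ₗ[K] (bcFD (K := K) N).V := θ.baseChange K

theorem bcPsi_one_tmul (N : FDModule k S) (s : S) :
    bcPsi (K := K) N ((1 : K) ⊗ₜ[k] s)
      = ((Algebra.lsmul k k N.V s : Module.End k N.V)).baseChange K := by
  rw [bcPsi, Algebra.TensorProduct.lift_tmul]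
  simp only [map_one, one_mul, AlgHom.comp_apply]
  rfl

theorem bcPsi_tmul (N : FDModule k S) (a : K) (s : S) :
    bcPsi (K := K) N (a ⊗ₜ[k] s)
      = a • ((Algebra.lsmul k k N.V s : Module.End k N.V)).baseChange K := by
  have h : (a ⊗ₜ[k] s : K ⊗[k] S) = a • ((1 : K) ⊗ₜ[k] s) := by
    rw [TensorProduct.smul_tmul', smul_eq_mul, mul_one]
  rw [h, map_smul, bcPsi_one_tmul]

/-- Extension of a linear functional on `S` to `K ⊗[k] S`. -/
noncomputable def dualBC (f : Module.Dual k S) : Module.Dual K (K ⊗[k] S) :=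
  LinearMap.liftBaseChange K ((Algebra.linearMap k K) ∘ₗ f)

theorem dualBC_tmul (f : Module.Dual k S) (a : K) (s : S) :
    dualBC f (a ⊗ₜ[k] s) = a * algebraMap k K (f s) := by
  simp [dualBC, smul_eq_mul]

theorem dualBC_zero : dualBC (K := K) (0 : Module.Dual k S) = 0 := by
  apply LinearMap.ext
  intro x
  induction x using TensorProduct.induction_on with
  | zero => simp
  | add x y hx hy => simp [map_add, hx, hy]
  | tmul a s => simp [dualBC_tmul]

theorem dualBC_add (f g : Module.Dual k S) :
    dualBC (K := K) (f + g) = dualBC f + dualBC g := by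
  apply LinearMap.ext
  intro x
  induction x using TensorProduct.induction_on with
  | zero => simp
  | add x y hx hy => simp [map_add, hx, hy]
  | tmul a s => simp [dualBC_tmul, mul_add]

theorem dualBC_smul (a : k) (f : Module.Dual k S) :
    dualBC (K := K) (a • f) = algebraMap k K a • dualBC f := by
  apply LinearMap.ext
  intro x
  induction x using TensorProduct.induction_on with
  | zero => simp
  | add x y hx hy => simp [map_add, hx, hy]
  | tmul b s =>
      simp only [dualBC_tmul, LinearMap.smul_apply, smul_eq_mul, map_mul]
      ring

theorem twChar_bcFD (N : FDModule k S) (θ : N.V →ₗ[k] N.V) (c : K) :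
    twChar (bcFD (K := K) N) (c • bcTheta N θ) = c • dualBC (twChar N θ) := by
  apply LinearMap.ext
  intro x
  induction x using TensorProduct.induction_on with
  | zero => simp
  | add x y hx hy => simp [map_add, hx, hy]
  | tmul a s =>
      have h1 : twChar (bcFD (K := K) N) (c • bcTheta N θ) (a ⊗ₜ[k] s)
          = LinearMap.trace K (K ⊗[k] N.V)
              ((c • θ.baseChange K) * (bcPsi (K := K) N (a ⊗ₜ[k] s))) := rfl
      rw [h1, bcPsi_tmul]
      set ρ : S →ₐ[k] Module.End k N.V := Algebra.lsmul k k N.V with hρ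
      have h2 : (c • θ.baseChange K) * (a • (ρ s : Module.End k N.V).baseChange K)
          = (c * a) • ((θ ∘ₗ (ρ s : Module.End k N.V)).baseChange K) := by
        rw [LinearMap.baseChange_comp, smul_mul_smul_comm]
        rfl
      rw [h2, map_smul, LinearMap.trace_baseChange]
      simp only [LinearMap.smul_apply, smul_eq_mul, dualBC_tmul]
      have h3 : twChar N θ s = LinearMap.trace k N.V (θ ∘ₗ (ρ s : Module.End k N.V)) := rfl
      rw [h3]
      ring

theorem bcFD_equivariant (R : Subalgebra k S) (N : FDModule k S) (θ : N.V →ₗ[k] N.V)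
    (hθ : ∀ r ∈ R, ∀ v : N.V, θ (r • v) = r • θ v) (c : K) :
    ∀ x ∈ Algebra.adjoin K
      ((Algebra.TensorProduct.includeRight : S →ₐ[k] K ⊗[k] S) '' (R : Set S)),
      ∀ v : (bcFD (K := K) N).V,
        (c • bcTheta N θ) (x • v) = x • (c • bcTheta N θ) v := by
  have key : ∀ x ∈ Algebra.adjoin K
      ((Algebra.TensorProduct.includeRight : S →ₐ[k] K ⊗[k] S) '' (R : Set S)),
      ∀ v : (bcFD (K := K) N).V, bcTheta N θ (x • v) = x • bcTheta N θ v := by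
    intro x hx
    induction hx using Algebra.adjoin_induction with
    | mem x hx =>
        obtain ⟨r, hr, rfl⟩ := hx
        intro v
        show θ.baseChange K
            (bcPsi (K := K) N (Algebra.TensorProduct.includeRight r) v)
          = bcPsi (K := K) N (Algebra.TensorProduct.includeRight r) (θ.baseChange K v)
        have hinc : bcPsi (K := K) N (Algebra.TensorProduct.includeRight r)
            = ((Algebra.lsmul k k N.V r : Module.End k N.V)).baseChange K :=
          bcPsi_one_tmul N r
        rw [hinc]
        have hcomm : θ ∘ₗ (Algebra.lsmul k k N.V r : Module.End k N.V)
            = (Algebra.lsmul k k N.V r : Module.End k N.V) ∘ₗ θ :=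
          LinearMap.ext fun w => hθ r hr w
        have h2 : (θ.baseChange K) ∘ₗ
              ((Algebra.lsmul k k N.V r : Module.End k N.V)).baseChange K
            = ((Algebra.lsmul k k N.V r : Module.End k N.V)).baseChange K ∘ₗ
              θ.baseChange K := by
          rw [← LinearMap.baseChange_comp, ← LinearMap.baseChange_comp, hcomm]
        exact LinearMap.ext_iff.mp h2 v
    | algebraMap c' =>
        intro v
        rw [algebraMap_smul, algebraMap_smul, map_smul]
    | add x y hx hy ihx ihy =>
        intro v
        rw [add_smul, add_smul, map_add, ihx, ihy]
    | mul x y hx hy ihx ihy =>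
        intro v
        rw [mul_smul, mul_smul, ihx, ihy]
  intro x hx v
  rw [LinearMap.smul_apply, LinearMap.smul_apply, key x hx v, smul_comm]

theorem smul_dualBC_mem (R : Subalgebra k S) (c : K) {f : Module.Dual k S}
    (hf : f ∈ relC0 k S R) :
    c • dualBC (K := K) f ∈ relC0 K (K ⊗[k] S)
      (Algebra.adjoin K
        ((Algebra.TensorProduct.includeRight : S →ₐ[k] K ⊗[k] S) '' (R : Set S))) := by
  induction hf using Submodule.span_induction with
  | mem f hf =>
      obtain ⟨N, θ, hθ, rfl⟩ := hf
      exact Submodule.subset_span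
        ⟨bcFD N, c • bcTheta N θ, bcFD_equivariant R N θ hθ c, (twChar_bcFD N θ c).symm⟩
  | zero =>
      rw [dualBC_zero, smul_zero]
      exact Submodule.zero_mem _
  | add f g hf hg ihf ihg =>
      rw [dualBC_add, smul_add]
      exact Submodule.add_mem _ ihf ihg
  | smul a f hf ih =>
      rw [dualBC_smul, smul_comm]
      exact Submodule.smul_mem _ _ ih

end BaseChange

end Paper

open Paper in
/-- Remark 3.6: if `R` is a constrained subalgebra of `S` and `K/k` is a field extension,
then `R_K = K ⊗_k R` is a constrained subalgebra of `S_K = K ⊗_k S`; here `R_K` is realised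
as the `K`-subalgebra of `K ⊗_k S` generated by the image `1 ⊗ R` of `R`. -/
theorem statement10 (k K S : Type) [Field k] [Field K] [Algebra k K]
    [Ring S] [Algebra k S] [FiniteDimensional k S]
    (hsplit : IsSplitAlgebra k S) (R : Subalgebra k S)
    (hR : IsConstrainedSubalgebra k S R) :
    IsConstrainedSubalgebra K (K ⊗[k] S)
      (Algebra.adjoin K
        ((Algebra.TensorProduct.includeRight : S →ₐ[k] K ⊗[k] S) '' (R : Set S))) := by
  set RK : Subalgebra K (K ⊗[k] S) :=
    Algebra.adjoin K
      ((Algebra.TensorProduct.includeRight : S →ₐ[k] K ⊗[k] S) '' (R : Set S)) with hRK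
  apply le_antisymm (relC0_le_dualAnnihilator RK)
  intro f hf
  rw [Submodule.mem_dualAnnihilator] at hf
  -- the restriction of `f` along `s ↦ 1 ⊗ s`
  set g : S →ₗ[k] K := (f.restrictScalars k) ∘ₗ
    (Algebra.TensorProduct.includeRight : S →ₐ[k] K ⊗[k] S).toLinearMap with hg
  set A : Submodule k S := relCommutator k S R with hA
  have hgA : A ≤ LinearMap.ker g := by
    rw [hA, relCommutator, Submodule.span_le]
    rintro _ ⟨r, hr, s, rfl⟩
    rw [SetLike.mem_coe, LinearMap.mem_ker]
    have h1 : g (r * s - s * r)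
        = f ((Algebra.TensorProduct.includeRight (R := k) (A := K) r)
            * (Algebra.TensorProduct.includeRight (R := k) (A := K) s)
          - (Algebra.TensorProduct.includeRight (R := k) (A := K) s)
            * (Algebra.TensorProduct.includeRight (R := k) (A := K) r)) := by
      rw [hg]
      simp [map_sub, map_mul]
    rw [h1]
    apply hf
    apply Submodule.subset_span
    exact ⟨Algebra.TensorProduct.includeRight r,
      Algebra.subset_adjoin ⟨r, hr, rfl⟩, Algebra.TensorProduct.includeRight s, rfl⟩
  -- factor g through the quotient S / [R,S]
  set gbar : (S ⧸ A) →ₗ[k] K := A.liftQ g hgA with hgbar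
  set b := Module.finBasis k (S ⧸ A) with hb
  set fj : Fin (Module.finrank k (S ⧸ A)) → Module.Dual k S :=
    fun j => (b.coord j) ∘ₗ A.mkQ with hfj
  have hfjC0 : ∀ j, fj j ∈ relC0 k S R := by
    intro j
    rw [hR]
    rw [Submodule.mem_dualAnnihilator]
    intro x hx
    have : A.mkQ x = 0 := (Submodule.Quotient.mk_eq_zero A).mpr hx
    rw [hfj]
    simp [this]
  have hgs : ∀ s : S, g s = ∑ j, (fj j s) • gbar (b j) := by
    intro s
    have h1 : g s = gbar (A.mkQ s) := rfl
    rw [h1]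
    conv_lhs => rw [← b.sum_repr (A.mkQ s)]
    rw [map_sum]
    congr 1
    ext j
    rw [map_smul]
    rfl
  have hfeq : f = ∑ j, (gbar (b j)) • dualBC (fj j) := by
    apply LinearMap.ext
    intro x
    induction x using TensorProduct.induction_on with
    | zero => simp
    | add x y hx hy => simp [map_add, hx, hy]
    | tmul a s =>
        have h0 : (a ⊗ₜ[k] s : K ⊗[k] S) = a • ((1 : K) ⊗ₜ[k] s) := by
          rw [TensorProduct.smul_tmul', smul_eq_mul, mul_one]
        have h1 : f (a ⊗ₜ[k] s) = a • g s := by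
          rw [h0, map_smul]
          congr 1
        rw [h1, hgs s]
        rw [LinearMap.sum_apply, Finset.smul_sum]
        congr 1
        ext j
        rw [LinearMap.smul_apply, dualBC_tmul]
        rw [Algebra.smul_def (fj j s) (gbar (b j)), smul_eq_mul, smul_eq_mul]
        ring
  rw [hfeq]
  exact Submodule.sum_mem _ fun j _ => smul_dualBC_mem R (gbar (b j)) (hfjC0 j)
end
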